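/- arXiv:2301.03970 — 7 statements merged into one kernel-verified Lean document; each statement's English description precedes it below -/
import Mathlib

section
/- Let Γ be a group, Γ₀ ≤ Γ a subgroup, and g ∈ Γ an element such that the conjugates g^i Γ₀ g^{-i}, for i ∈ ℤ, pairwise commute (elementwise, for distinct i). Then there exists a surjective group homomorphism from the restricted wreath product Γ₀ ≀ ℤ onto the subgroup ⟨Γ₀, g⟩ of Γ whose kernel is metabelian. -/
/-- The restricted direct product `⊕_{i∈ℤ} Γ₀`, as the subgroup of `ℤ → Γ₀` of finitely
supported functions. -/
def wreathBase (Γ₀ : Type*) [Group Γ₀] : Subgroup (ℤ → Γ₀) where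
  carrier := {f | {i | f i ≠ 1}.Finite}
  one_mem' := by simp
  mul_mem' := by
    intro a b ha hb
    apply (ha.union hb).subset
    intro i hi
    simp only [Set.mem_union, Set.mem_setOf_eq]
    by_contra h
    push_neg at h
    exact hi (by simp [Pi.mul_apply, h.1, h.2])
  inv_mem' := by
    intro a ha
    have h : {i | a⁻¹ i ≠ 1} = {i | a i ≠ 1} := by
      ext i
      simp [inv_eq_one]
    show {i | a⁻¹ i ≠ 1}.Finite
    rw [h]
    exact ha

/-- The shift automorphism of the restricted direct product. -/
def wreathShift (Γ₀ : Type*) [Group Γ₀] (n : ℤ) : wreathBase Γ₀ ≃* wreathBase Γ₀ where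
  toFun f := ⟨fun i => (f : ℤ → Γ₀) (i - n), by
    apply (f.2.image (· + n)).subset
    intro i hi
    exact ⟨i - n, hi, by ring⟩⟩
  invFun f := ⟨fun i => (f : ℤ → Γ₀) (i + n), by
    apply (f.2.image (· - n)).subset
    intro i hi
    exact ⟨i + n, hi, by ring⟩⟩
  left_inv f := by
    apply Subtype.ext
    funext i
    show (f : ℤ → Γ₀) (i + n - n) = (f : ℤ → Γ₀) i
    congr 1
    ring
  right_inv f := by
    apply Subtype.ext
    funext i
    show (f : ℤ → Γ₀) (i - n + n) = (f : ℤ → Γ₀) i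
    congr 1
    ring
  map_mul' f g := rfl

/-- The shift action of `ℤ` on `⊕_{i∈ℤ} Γ₀`. -/
def wreathShiftHom (Γ₀ : Type*) [Group Γ₀] :
    Multiplicative ℤ →* MulAut (wreathBase Γ₀) where
  toFun n := wreathShift Γ₀ n.toAdd
  map_one' := by
    ext f i
    show (f : ℤ → Γ₀) (i - 0) = (f : ℤ → Γ₀) i
    congr 1
    ring
  map_mul' x y := by
    ext f i
    show (f : ℤ → Γ₀) (i - (x.toAdd + y.toAdd)) = (f : ℤ → Γ₀) (i - x.toAdd - y.toAdd)
    congr 1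
    ring

/-- The restricted wreath product `Γ₀ ≀ ℤ = (⊕_{i∈ℤ} Γ₀) ⋊ ℤ`. -/
def Wreath (Γ₀ : Type*) [Group Γ₀] : Type _ :=
  SemidirectProduct (wreathBase Γ₀) (Multiplicative ℤ) (wreathShiftHom Γ₀)

instance (Γ₀ : Type*) [Group Γ₀] : Group (Wreath Γ₀) :=
  inferInstanceAs (Group (SemidirectProduct _ _ _))

/-! Since the conjugates `gⁱ Γ₀ g⁻ⁱ` commute with each other, `(fᵢ) ↦ ∏ gⁱ fᵢ g⁻ⁱ` is a
homomorphism `Φ` on `⊕ Γ₀` which intertwines the shift with conjugation by `g`, so together with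
`p ↦ gᵖ` it defines a homomorphism on `Γ₀ ≀ ℤ`, whose image is generated by `g` and the image `Γ₀`
of the `0`-th summand. As `ℤ` is abelian, commutators of `Γ₀ ≀ ℤ` lie in the base, and those of
kernel elements lie in `ker Φ`. Finally `ker Φ` is central in the base: if `Φ f = 1`, then
`gⁱ fᵢ g⁻ⁱ` is the inverse of the product of the other factors, hence commutes with `gⁱ Γ₀ g⁻ⁱ`,
so `fᵢ` is central in `Γ₀`. -/

open scoped commutatorElement
open Function

namespace Finset

theorem noncommProd_subset {α β : Type*} [Monoid β] {s₁ s₂ : Finset α} {f : α → β}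
    (h : s₁ ⊆ s₂) (hf : ∀ x ∈ s₂, x ∉ s₁ → f x = 1)
    (comm : (s₂ : Set α).Pairwise (Commute on f)) :
    s₁.noncommProd f (comm.mono (coe_subset.2 h)) = s₂.noncommProd f comm := by
  classical
  calc s₁.noncommProd f _
      = s₁.noncommProd f _ * (s₂ \ s₁).noncommProd f (comm.mono (by simp)) := by
        rw [noncommProd_eq_pow_card _ _ _ 1 fun x hx => hf x (mem_sdiff.1 hx).1 (mem_sdiff.1 hx).2,
          one_pow, mul_one]
    _ = (s₁ ∪ (s₂ \ s₁)).noncommProd f (comm.mono (by simp [h])) :=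
        (noncommProd_union_of_disjoint disjoint_sdiff _ _).symm
    _ = s₂.noncommProd f comm := noncommProd_congr (union_sdiff_of_subset h) (fun _ _ => rfl) _

theorem noncommProd_map {α γ β : Type*} [Monoid β] (s : Finset α) (e : α ↪ γ) (f : γ → β)
    (comm : (s.map e : Set γ).Pairwise (Commute on f)) :
    (s.map e).noncommProd f comm =
      s.noncommProd (f ∘ e) (fun _ hx _ hy hxy => comm (by simpa using hx) (by simpa using hy)
        (e.injective.ne hxy)) := by
  simp only [noncommProd, map_val, Multiset.map_map]

end Finset

theorem mulSingle_mem_wreathBase {M : Type*} [Group M] (i : ℤ) (x : M) :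
    Pi.mulSingle i x ∈ wreathBase M :=
  (Set.finite_singleton i).subset Pi.mulSupport_mulSingle_subset

@[simp]
theorem wreathShift_apply {M : Type*} [Group M] (n : ℤ) (f : wreathBase M) (i : ℤ) :
    (wreathShift M n f : ℤ → M) i = (f : ℤ → M) (i - n) :=
  rfl

namespace wreathBase

theorem finite_mulSupport {M : Type*} [Group M] (f : wreathBase M) :
    (mulSupport (f : ℤ → M)).Finite :=
  f.2

variable {M G : Type*} [Group M] [Group G] (ψ : ℤ → M →* G)
  (hψ : Pairwise fun i j => ∀ x y, Commute (ψ i x) (ψ j y))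

theorem noncommProd_eq_of_mulSupport_subset {f : ℤ → M} {s t : Finset ℤ}
    (hs : mulSupport f ⊆ s) (ht : mulSupport f ⊆ t) :
    s.noncommProd (fun i => ψ i (f i)) (fun _ _ _ _ hij => hψ hij _ _) =
      t.noncommProd (fun i => ψ i (f i)) (fun _ _ _ _ hij => hψ hij _ _) := by
  classical
  have extend : ∀ {u v : Finset ℤ}, u ⊆ v → mulSupport f ⊆ u →
      u.noncommProd (fun i => ψ i (f i)) (fun _ _ _ _ hij => hψ hij _ _) =
        v.noncommProd (fun i => ψ i (f i)) (fun _ _ _ _ hij => hψ hij _ _) := fun huv hu =>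
    Finset.noncommProd_subset huv
      (fun i _ hi => by rw [notMem_mulSupport.1 (fun h => hi (hu h)), map_one]) _
  have hst : mulSupport f ⊆ ↑(s ∩ t) := by
    rw [Finset.coe_inter]
    exact Set.subset_inter hs ht
  exact (extend Finset.inter_subset_left hst).symm.trans (extend Finset.inter_subset_right hst)

noncomputable def lift : wreathBase M →* G where
  toFun f := (finite_mulSupport f).toFinset.noncommProd (fun i => ψ i (f.1 i))
    fun _ _ _ _ hij => hψ hij _ _
  map_one' :=
    (noncommProd_eq_of_mulSupport_subset ψ hψ (t := ∅) (Set.Finite.coe_toFinset _).ge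
      (by simp)).trans (Finset.noncommProd_empty _ _)
  map_mul' f h := by
    classical
    set u := (finite_mulSupport f).toFinset ∪ (finite_mulSupport h).toFinset
    have hf : mulSupport (f : ℤ → M) ⊆ u := by simp [u]
    have hh : mulSupport (h : ℤ → M) ⊆ u := by simp [u]
    have hfh : mulSupport ((f * h : wreathBase M) : ℤ → M) ⊆ u :=
      (mulSupport_mul _ _).trans (Set.union_subset hf hh)
    rw [noncommProd_eq_of_mulSupport_subset ψ hψ (Set.Finite.coe_toFinset _).ge hfh,
      noncommProd_eq_of_mulSupport_subset ψ hψ (Set.Finite.coe_toFinset _).ge hf,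
      noncommProd_eq_of_mulSupport_subset ψ hψ (Set.Finite.coe_toFinset _).ge hh]
    exact (Finset.noncommProd_congr rfl (g := (fun i => ψ i (f.1 i)) * fun i => ψ i (h.1 i))
      (fun i _ => map_mul _ _ _) _).trans
      (Finset.noncommProd_mul_distrib _ _ _ _ fun _ _ _ _ hij => hψ hij _ _)

theorem lift_eq_noncommProd (f : wreathBase M) {s : Finset ℤ} (hs : mulSupport (f : ℤ → M) ⊆ s) :
    lift ψ hψ f = s.noncommProd (fun i => ψ i (f.1 i)) (fun _ _ _ _ hij => hψ hij _ _) :=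
  noncommProd_eq_of_mulSupport_subset ψ hψ (Set.Finite.coe_toFinset _).ge hs

theorem lift_mulSingle (i : ℤ) (x : M) :
    lift ψ hψ ⟨Pi.mulSingle i x, mulSingle_mem_wreathBase i x⟩ = ψ i x := by
  rw [lift_eq_noncommProd ψ hψ _ (s := {i}) (by simpa using Pi.mulSupport_mulSingle_subset),
    Finset.noncommProd_singleton]
  simp

theorem range_lift_le {K : Subgroup G} (hK : ∀ i x, ψ i x ∈ K) : (lift ψ hψ).range ≤ K := by
  rintro _ ⟨f, rfl⟩
  exact Finset.noncommProd_induction _ _ (fun _ _ _ _ hij => hψ hij _ _) (· ∈ K)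
    (fun _ _ => K.mul_mem) K.one_mem fun i _ => hK i _

theorem lift_shift {n : ℤ} {u : G} (hu : ∀ i x, ψ (i + n) x = u * ψ i x * u⁻¹)
    (f : wreathBase M) : lift ψ hψ (wreathShift M n f) = u * lift ψ hψ f * u⁻¹ := by
  set s := (finite_mulSupport f).toFinset
  have hshift : mulSupport ((wreathShift M n f : wreathBase M) : ℤ → M) ⊆
      ↑(s.map (addRightEmbedding n)) := fun i hi =>
    Finset.mem_map.2 ⟨i - n, (Set.Finite.mem_toFinset _).2 hi, sub_add_cancel i n⟩
  rw [lift_eq_noncommProd ψ hψ _ hshift]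
  refine (Finset.noncommProd_map _ _ _ _).trans ?_
  rw [lift_eq_noncommProd ψ hψ f (s := s) (Set.Finite.coe_toFinset _).ge, ← MulAut.conj_apply]
  refine .trans ?_ (Finset.map_noncommProd _ _ _ _).symm
  refine Finset.noncommProd_congr rfl (fun j _ => ?_) _
  simp only [comp_apply, addRightEmbedding_apply, wreathShift_apply, add_sub_cancel_right, hu,
    MulAut.conj_apply]

theorem ker_lift_le_center (hinj : ∀ i, Injective (ψ i)) :
    (lift ψ hψ).ker ≤ Subgroup.center (wreathBase M) := by
  classical
  intro f hf
  have key : ∀ i y, Commute (ψ i (f.1 i)) (ψ i y) := by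
    intro i y
    set t := (finite_mulSupport f).toFinset.erase i
    have hsupp : mulSupport (f : ℤ → M) ⊆ ↑(insert i t) := by simp [t]
    have hprod := (MonoidHom.mem_ker.1 hf).symm.trans ((lift_eq_noncommProd ψ hψ f hsupp).trans
      (Finset.noncommProd_insert_of_notMem _ _ _ _ (Finset.notMem_erase i _)))
    rw [eq_inv_of_mul_eq_one_left hprod.symm]
    refine (Finset.noncommProd_commute _ _ _ _ fun j hj => ?_).inv_right.symm
    exact hψ (Finset.ne_of_mem_erase hj).symm _ _
  refine Subgroup.mem_center_iff.2 fun f' => Subtype.ext (funext fun i => hinj i ?_)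
  show ψ i (f'.1 i * f.1 i) = ψ i (f.1 i * f'.1 i)
  rw [map_mul, map_mul]
  exact (key i (f'.1 i)).eq.symm

end wreathBase

namespace SemidirectProduct

variable {N G H : Type*} [Group N] [Group H] {fn : N →* H}

theorem range_lift [Group G] {φ : G →* MulAut N} {fg : G →* H}
    {h : ∀ g, fn.comp (φ g).toMonoidHom = (MulAut.conj (fg g)).toMonoidHom.comp fn} :
    (lift fn fg h).range = fn.range ⊔ fg.range := by
  refine le_antisymm ?_ (sup_le ?_ ?_)
  · rintro _ ⟨x, rfl⟩
    rw [← inl_left_mul_inr_right x, map_mul, lift_inl, lift_inr]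
    exact Subgroup.mul_mem_sup ⟨_, rfl⟩ ⟨_, rfl⟩
  · rintro _ ⟨n, rfl⟩
    exact ⟨inl n, lift_inl fn fg h n⟩
  · rintro _ ⟨g, rfl⟩
    exact ⟨inr g, lift_inr fn fg h g⟩

theorem exists_inl_eq_commutatorElement [CommGroup G] {φ : G →* MulAut N} (x y : N ⋊[φ] G) :
    ∃ n, inl n = ⁅x, y⁆ := by
  have : ⁅x, y⁆ ∈ (rightHom : N ⋊[φ] G →* G).ker := by
    rw [MonoidHom.mem_ker, map_commutatorElement, commutatorElement_eq_one_iff_commute]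
    exact Commute.all _ _
  exact range_inl_eq_ker_rightHom.ge this

theorem commute_commutatorElement_of_ker_le_center [CommGroup G] {φ : G →* MulAut N}
    {fg : G →* H} {h : ∀ g, fn.comp (φ g).toMonoidHom = (MulAut.conj (fg g)).toMonoidHom.comp fn}
    (hker : fn.ker ≤ Subgroup.center N) {a b c d : N ⋊[φ] G}
    (ha : a ∈ (lift fn fg h).ker) (hb : b ∈ (lift fn fg h).ker) :
    Commute ⁅a, b⁆ ⁅c, d⁆ := by
  obtain ⟨n₁, hn₁⟩ := exists_inl_eq_commutatorElement a b
  obtain ⟨n₂, hn₂⟩ := exists_inl_eq_commutatorElement c d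
  have hker₁ : n₁ ∈ fn.ker := by
    rw [MonoidHom.mem_ker, ← lift_inl fn fg h, hn₁, map_commutatorElement,
      MonoidHom.mem_ker.1 ha, MonoidHom.mem_ker.1 hb, commutatorElement_one_left]
  have hcomm : Commute n₁ n₂ := (Subgroup.mem_center_iff.1 (hker hker₁) n₂).symm
  rw [← hn₁, ← hn₂]
  exact hcomm.map inl

end SemidirectProduct

namespace Subgroup

variable {Γ : Type*} [Group Γ] (Γ₀ : Subgroup Γ) (g : Γ)

def conjZPow (i : ℤ) : Γ₀ →* Γ :=
  (MulAut.conj (g ^ i)).toMonoidHom.comp Γ₀.subtype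

theorem conjZPow_apply (i : ℤ) (x : Γ₀) : Γ₀.conjZPow g i x = g ^ i * x * g ^ (-i) := by
  rw [zpow_neg]
  rfl

theorem conjZPow_injective (i : ℤ) : Injective (Γ₀.conjZPow g i) :=
  (MulAut.conj (g ^ i)).injective.comp Γ₀.subtype_injective

theorem conjZPow_add (i n : ℤ) (x : Γ₀) :
    Γ₀.conjZPow g (i + n) x = g ^ n * Γ₀.conjZPow g i x * (g ^ n)⁻¹ := by
  simp only [conjZPow_apply]
  group

theorem conjZPow_mem_sup_zpowers (i : ℤ) (x : Γ₀) : Γ₀.conjZPow g i x ∈ Γ₀ ⊔ zpowers g := by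
  have hg : g ^ i ∈ Γ₀ ⊔ zpowers g := mem_sup_right (zpow_mem_zpowers g i)
  rw [conjZPow_apply, zpow_neg]
  exact mul_mem (mul_mem hg (mem_sup_left x.2)) (inv_mem hg)

end Subgroup

/-- If the conjugates `gⁱ Γ₀ g⁻ⁱ` pairwise commute elementwise, then there is a
surjective homomorphism from `Γ₀ ≀ ℤ` onto `⟨Γ₀, g⟩` whose kernel is metabelian (i.e. commutators
of kernel elements pairwise commute). -/
theorem stmt2 {Γ : Type*} [Group Γ] (Γ₀ : Subgroup Γ) (g : Γ)
    (hcomm : ∀ i j : ℤ, i ≠ j → ∀ a b : Γ, a ∈ Γ₀ → b ∈ Γ₀ →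
      Commute (g ^ i * a * g ^ (-i)) (g ^ j * b * g ^ (-j))) :
    ∃ φ : Wreath ↥Γ₀ →* Γ,
      φ.range = Subgroup.closure ((Γ₀ : Set Γ) ∪ {g}) ∧
      ∀ a b c d : Wreath ↥Γ₀, a ∈ φ.ker → b ∈ φ.ker → c ∈ φ.ker → d ∈ φ.ker →
        Commute ⁅a, b⁆ ⁅c, d⁆ := by
  have hψ : Pairwise fun i j => ∀ x y : Γ₀, Commute (Γ₀.conjZPow g i x) (Γ₀.conjZPow g j y) :=
    fun i j hij x y => by
      simpa only [Subgroup.conjZPow_apply] using hcomm i j hij x y x.2 y.2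
  set Φ := wreathBase.lift (Γ₀.conjZPow g) hψ
  have hΦ : ∀ n, Φ.comp (wreathShiftHom Γ₀ n).toMonoidHom =
      (MulAut.conj (zpowersHom Γ g n)).toMonoidHom.comp Φ := fun n =>
    MonoidHom.ext (wreathBase.lift_shift _ hψ (Γ₀.conjZPow_add g · n.toAdd))
  refine ⟨SemidirectProduct.lift Φ (zpowersHom Γ g) hΦ, ?_, fun _ _ _ _ ha hb _ _ =>
    SemidirectProduct.commute_commutatorElement_of_ker_le_center
      (wreathBase.ker_lift_le_center _ hψ (Γ₀.conjZPow_injective g)) ha hb⟩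
  have hΓ₀ : Γ₀ ≤ Φ.range := fun x hx =>
    ⟨_, (wreathBase.lift_mulSingle _ hψ 0 ⟨x, hx⟩).trans (by simp [Subgroup.conjZPow_apply])⟩
  have hΦ_le : Φ.range ≤ Γ₀ ⊔ Subgroup.zpowers g :=
    wreathBase.range_lift_le _ hψ (Γ₀.conjZPow_mem_sup_zpowers g)
  refine SemidirectProduct.range_lift.trans ?_
  rw [Subgroup.range_zpowersHom, Subgroup.closure_union,
    Subgroup.closure_eq, ← Subgroup.zpowers_eq_closure]
  exact le_antisymm (sup_le hΦ_le le_sup_right) (sup_le_sup_right hΓ₀ _)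
end

section
/- Let Γ be a group, Γ₀ ≤ Γ a subgroup, and g ∈ Γ such that the conjugates g^i Γ₀ g^{-i} (i ∈ ℤ) pairwise commute elementwise. Let φ : Γ₀ ≀ ℤ → Γ be the natural homomorphism sending ((g_i)_i, p) to (∏_i g^i g_i g^{-i}) g^p, and let K = ker φ ∩ (⊕_i Γ₀). Then K is abelian. -/
/-- The element of `⊕_{i∈ℤ} Γ₀` supported at the single coordinate `i` with value `a`. -/
def baseSingle {Γ₀ : Type*} [Group Γ₀] (i : ℤ) (a : Γ₀) : wreathBase Γ₀ :=
  ⟨Pi.mulSingle i a, (Set.finite_singleton i).subset (by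
    intro j hj
    simp only [Set.mem_setOf_eq] at hj
    by_contra h
    exact hj (by simp [Pi.mulSingle_eq_of_ne (show j ≠ i by simpa using h)]))⟩

section Aux

lemma noncommProd_single_aux {M : Type*} [Monoid M] (k : ℤ) (F : ℤ → M) (s : Finset ℤ) :
    ∀ (_ : ∀ j ∈ s, j ≠ k → F j = 1)
      (hc : (↑s : Set ℤ).Pairwise fun a b => Commute (F a) (F b)),
      s.noncommProd F hc = if k ∈ s then F k else 1 := by
  induction s using Finset.induction_on with
  | empty => intro _ _; simp
  | @insert a t ha ih =>
    intro h1 hc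
    rw [Finset.noncommProd_insert_of_notMem _ _ _ _ ha,
      ih (fun j hj hjk => h1 j (Finset.mem_insert_of_mem hj) hjk)
        (hc.mono (by simp [Finset.coe_insert, Set.subset_insert]))]
    by_cases hak : a = k
    · subst hak
      simp [ha]
    · rw [h1 a (Finset.mem_insert_self a t) hak, one_mul]
      simp [Finset.mem_insert, Ne.symm hak]

lemma baseSingle_pairwise {Γ₀ : Type*} [Group Γ₀] (f : wreathBase Γ₀) (s : Finset ℤ) :
    (↑s : Set ℤ).Pairwise fun a b =>
      Commute (baseSingle a ((f : ℤ → Γ₀) a)) (baseSingle b ((f : ℤ → Γ₀) b)) := by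
  intro a _ b _ hab
  apply Subtype.ext
  exact (Pi.mulSingle_commute (f := fun _ : ℤ => Γ₀) hab
    ((f : ℤ → Γ₀) a) ((f : ℤ → Γ₀) b)).eq

lemma base_eq_noncommProd {Γ₀ : Type*} [Group Γ₀] (f : wreathBase Γ₀) (s : Finset ℤ)
    (hs : ∀ j : ℤ, (f : ℤ → Γ₀) j ≠ 1 → j ∈ s) :
    f = s.noncommProd (fun j => baseSingle j ((f : ℤ → Γ₀) j)) (baseSingle_pairwise f s) := by
  apply Subtype.ext
  funext k
  have hmap := Finset.map_noncommProd s (fun j => baseSingle j ((f : ℤ → Γ₀) j))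
    (baseSingle_pairwise f s)
    ((Pi.evalMonoidHom (fun _ : ℤ => Γ₀) k).comp (wreathBase Γ₀).subtype)
  have key : ((Pi.evalMonoidHom (fun _ : ℤ => Γ₀) k).comp (wreathBase Γ₀).subtype)
      (s.noncommProd (fun j => baseSingle j ((f : ℤ → Γ₀) j)) (baseSingle_pairwise f s)) =
      if k ∈ s then (f : ℤ → Γ₀) k else 1 := by
    rw [hmap]
    have h2 := noncommProd_single_aux k
      (fun j => ((Pi.evalMonoidHom (fun _ : ℤ => Γ₀) k).comp (wreathBase Γ₀).subtype)
        (baseSingle j ((f : ℤ → Γ₀) j))) s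
      (fun j _ hjk => by
        show Pi.mulSingle (M := fun _ : ℤ => Γ₀) j ((f : ℤ → Γ₀) j) k = 1
        exact Pi.mulSingle_eq_of_ne (Ne.symm hjk) _)
    refine (h2 _).trans ?_
    by_cases hk : k ∈ s
    · simp only [hk, if_true]
      show Pi.mulSingle (M := fun _ : ℤ => Γ₀) k ((f : ℤ → Γ₀) k) k = _
      simp
    · simp [hk]
  have goal2 : (f : ℤ → Γ₀) k = if k ∈ s then (f : ℤ → Γ₀) k else 1 := by
    by_cases hk : k ∈ s
    · simp [hk]
    · simp only [hk, if_false]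
      by_contra h
      exact hk (hs k h)
  exact goal2.trans key.symm

end Aux

/-- With pairwise commuting conjugates `gⁱ Γ₀ g⁻ⁱ`, if `φ : Γ₀ ≀ ℤ → Γ` is the
natural homomorphism `((gᵢ)ᵢ, p) ↦ (∏ᵢ gⁱ gᵢ g⁻ⁱ) gᵖ` (characterized by its values on the
single-coordinate elements and on the generator of `ℤ`), and `K = ker φ ∩ ⊕ᵢ Γ₀`, then `K` is
abelian. -/
theorem stmt3 {Γ : Type*} [Group Γ] (Γ₀ : Subgroup Γ) (g : Γ)
    (hcomm : ∀ i j : ℤ, i ≠ j → ∀ a b : Γ, a ∈ Γ₀ → b ∈ Γ₀ →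
      Commute (g ^ i * a * g ^ (-i)) (g ^ j * b * g ^ (-j)))
    (φ : Wreath ↥Γ₀ →* Γ)
    (hφ1 : ∀ (i : ℤ) (a : ↥Γ₀),
      φ (SemidirectProduct.inl (baseSingle i a)) = g ^ i * (a : Γ) * g ^ (-i))
    (hφ2 : φ (SemidirectProduct.inr (Multiplicative.ofAdd (1 : ℤ))) = g) :
    ∀ x y : Wreath ↥Γ₀, x ∈ φ.ker → y ∈ φ.ker →
      x.right = 1 → y.right = 1 → Commute x y := by
  intro x y hx hy hxr hyr
  have key : ∀ f : wreathBase ↥Γ₀, φ (SemidirectProduct.inl f) = 1 →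
      ∀ (i : ℤ) (a : ↥Γ₀), Commute (((f : ℤ → ↥Γ₀) i : Γ)) ((a : Γ)) := by
    intro f hf i a
    classical
    set s : Finset ℤ := insert i f.2.toFinset with hs_def
    have hs : ∀ j : ℤ, (f : ℤ → ↥Γ₀) j ≠ 1 → j ∈ s := fun j hj =>
      Finset.mem_insert_of_mem (f.2.mem_toFinset.mpr hj)
    have hFc : (↑s : Set ℤ).Pairwise fun a b =>
        Commute (g ^ a * ((f : ℤ → ↥Γ₀) a : Γ) * g ^ (-a))
          (g ^ b * ((f : ℤ → ↥Γ₀) b : Γ) * g ^ (-b)) :=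
      fun a _ b _ hab => hcomm a b hab _ _ ((f : ℤ → ↥Γ₀) a).2 ((f : ℤ → ↥Γ₀) b).2
    have h1 : s.noncommProd (fun j => g ^ j * ((f : ℤ → ↥Γ₀) j : Γ) * g ^ (-j)) hFc = 1 := by
      have hmap := Finset.map_noncommProd s
        (fun j => baseSingle j ((f : ℤ → ↥Γ₀) j)) (baseSingle_pairwise f s)
        (φ.comp (SemidirectProduct.inl (G := Multiplicative ℤ) (φ := wreathShiftHom ↥Γ₀)))
      have hGc : (↑s : Set ℤ).Pairwise (Function.onFun Commute fun j =>
          (φ.comp (SemidirectProduct.inl (G := Multiplicative ℤ)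
            (φ := wreathShiftHom ↥Γ₀))) (baseSingle j ((f : ℤ → ↥Γ₀) j))) := by
        intro a ha b hb hab
        show Commute (φ (SemidirectProduct.inl (baseSingle a ((f : ℤ → ↥Γ₀) a))))
          (φ (SemidirectProduct.inl (baseSingle b ((f : ℤ → ↥Γ₀) b))))
        rw [hφ1, hφ1]
        exact hFc ha hb hab
      have hcongr := Finset.noncommProd_congr (s₁ := s) (s₂ := s)
        (f := fun j => (φ.comp (SemidirectProduct.inl
          (G := Multiplicative ℤ) (φ := wreathShiftHom ↥Γ₀))) (baseSingle j ((f : ℤ → ↥Γ₀) j)))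
        (g := fun j => g ^ j * ((f : ℤ → ↥Γ₀) j : Γ) * g ^ (-j))
        rfl (fun j _ => hφ1 j ((f : ℤ → ↥Γ₀) j)) hGc
      calc s.noncommProd (fun j => g ^ j * ((f : ℤ → ↥Γ₀) j : Γ) * g ^ (-j)) hFc
          = _ := hcongr.symm
        _ = (φ.comp (SemidirectProduct.inl (G := Multiplicative ℤ)
              (φ := wreathShiftHom ↥Γ₀)))
              (s.noncommProd (fun j => baseSingle j ((f : ℤ → ↥Γ₀) j))
                (baseSingle_pairwise f s)) := hmap.symm
        _ = φ (SemidirectProduct.inl f) := by rw [← base_eq_noncommProd f s hs]; rfl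
        _ = 1 := hf
    have hi : i ∈ s := Finset.mem_insert_self i _
    have h2 := (Finset.mul_noncommProd_erase s hi
      (fun j => g ^ j * ((f : ℤ → ↥Γ₀) j : Γ) * g ^ (-j)) hFc).trans h1
    set P := (s.erase i).noncommProd (fun j => g ^ j * ((f : ℤ → ↥Γ₀) j : Γ) * g ^ (-j))
      (fun _ hx _ hy hxy => hFc (s.mem_of_mem_erase hx) (s.mem_of_mem_erase hy) hxy)
      with hP_def
    have hPc : Commute (g ^ i * (a : Γ) * g ^ (-i)) P := by
      apply Finset.noncommProd_commute
      intro j hj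
      exact hcomm i j (Ne.symm (Finset.ne_of_mem_erase hj)) _ _ a.2 ((f : ℤ → ↥Γ₀) j).2
    have hFi : g ^ i * ((f : ℤ → ↥Γ₀) i : Γ) * g ^ (-i) = P⁻¹ :=
      eq_inv_of_mul_eq_one_left h2
    have hcc : Commute (g ^ i * (a : Γ) * g ^ (-i))
        (g ^ i * ((f : ℤ → ↥Γ₀) i : Γ) * g ^ (-i)) := by
      rw [hFi]; exact hPc.inv_right
    have hcc2 : Commute ((a : Γ)) (((f : ℤ → ↥Γ₀) i : Γ)) := by
      simpa [MulAut.conj_apply, zpow_neg] using hcc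
    exact hcc2.symm
  have hxeq : SemidirectProduct.inl x.left = x := by
    cases x with
    | mk l r =>
      simp only [SemidirectProduct.right] at hxr
      subst hxr
      rfl
  have hyeq : SemidirectProduct.inl y.left = y := by
    cases y with
    | mk l r =>
      simp only [SemidirectProduct.right] at hyr
      subst hyr
      rfl
  have hx1 : φ (SemidirectProduct.inl x.left) = 1 := by
    rw [hxeq]; exact hx
  have hbase : Commute x.left y.left := by
    apply Subtype.ext
    funext i
    show (x.left : ℤ → ↥Γ₀) i * (y.left : ℤ → ↥Γ₀) i =
      (y.left : ℤ → ↥Γ₀) i * (x.left : ℤ → ↥Γ₀) i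
    apply Subtype.ext
    exact (key x.left hx1 i ((y.left : ℤ → ↥Γ₀) i)).eq
  rw [← hxeq, ← hyeq]
  exact hbase.map SemidirectProduct.inl
end

section
/- Let Γ be a group and Γ₀ ≤ Γ a subgroup such that every finite subset of Γ is contained in some Γ-conjugate of Γ₀. Then Γ₀ is coamenable in Γ, i.e., there exists a Γ-invariant mean on ℓ^∞(Γ/Γ₀). -/
open Filter Topology


/-- A function `X → ℝ` is bounded. -/
def IsBddFun {X : Type*} (f : X → ℝ) : Prop := ∃ C : ℝ, ∀ x, |f x| ≤ C

/-- `m` is a `Γ`-invariant mean on `ℓ^∞(Γ/Λ)`: it is linear on bounded functions, normalized,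
bounded by the sup-norm, and invariant under the left translation action of `Γ`. -/
def IsInvariantMean {Γ : Type*} [Group Γ] (Λ : Subgroup Γ)
    (m : ((Γ ⧸ Λ) → ℝ) → ℝ) : Prop :=
  (∀ f h : (Γ ⧸ Λ) → ℝ, IsBddFun f → IsBddFun h → m (f + h) = m f + m h) ∧
  (∀ (c : ℝ) (f : (Γ ⧸ Λ) → ℝ), IsBddFun f → m (c • f) = c * m f) ∧
  m (fun _ => 1) = 1 ∧
  (∀ (f : (Γ ⧸ Λ) → ℝ) (C : ℝ), (∀ x, |f x| ≤ C) → |m f| ≤ C) ∧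
  (∀ (g : Γ) (f : (Γ ⧸ Λ) → ℝ), IsBddFun f → m (fun x => f (g⁻¹ • x)) = m f)

/-- A subgroup `Λ ≤ Γ` is coamenable if `Γ/Λ` carries a `Γ`-invariant mean. -/
def Coamenable {Γ : Type*} [Group Γ] (Λ : Subgroup Γ) : Prop :=
  ∃ m : ((Γ ⧸ Λ) → ℝ) → ℝ, IsInvariantMean Λ m

/-- If every finite subset of `Γ` is contained in some `Γ`-conjugate of `Γ₀`,
then `Γ₀` is coamenable in `Γ`. -/
theorem stmt4 {Γ : Type*} [Group Γ] (Γ₀ : Subgroup Γ)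
    (h : ∀ A : Finset Γ, ∃ x : Γ, ∀ a ∈ A, x⁻¹ * a * x ∈ Γ₀) :
    Coamenable Γ₀ := by
  classical
  -- the point of `Γ ⧸ Γ₀` chosen for a finite set `A`
  let pt : Finset Γ → Γ ⧸ Γ₀ := fun A => ((h A).choose : Γ)
  have hfix : ∀ (g : Γ) (A : Finset Γ), g ∈ A → g • pt A = pt A := by
    intro g A hg
    have hx := (h A).choose_spec g hg
    show ((g * (h A).choose : Γ) : Γ ⧸ Γ₀) = ((h A).choose : Γ)
    rw [QuotientGroup.eq]
    have : ((h A).choose⁻¹ * g * (h A).choose)⁻¹ ∈ Γ₀ := Γ₀.inv_mem hx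
    simpa [mul_assoc, mul_inv_rev] using this
  -- an ultrafilter extending `atTop` on finite sets
  let U : Ultrafilter (Finset Γ) := Ultrafilter.of atTop
  have hU : (U : Filter (Finset Γ)) ≤ atTop := Ultrafilter.of_le _
  let m : ((Γ ⧸ Γ₀) → ℝ) → ℝ := fun f => limUnder (U : Filter (Finset Γ)) (fun A => f (pt A))
  have htend : ∀ f : (Γ ⧸ Γ₀) → ℝ, IsBddFun f →
      Filter.Tendsto (fun A => f (pt A)) (U : Filter (Finset Γ)) (nhds (m f)) := by
    rintro f ⟨C, hC⟩
    have hmem : (U.map (fun A => f (pt A)) : Filter ℝ) ≤ Filter.principal (Set.Icc (-C) C) := by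
      rw [Filter.le_principal_iff]
      exact Filter.eventually_map.mpr (Filter.Eventually.of_forall fun A => abs_le.mp (hC _))
    obtain ⟨x, -, hx⟩ := (isCompact_Icc (a := -C) (b := C)).ultrafilter_le_nhds
      (U.map (fun A => f (pt A))) hmem
    have ht : Filter.Tendsto (fun A => f (pt A)) (U : Filter (Finset Γ)) (nhds x) := hx
    have hm : m f = x := ht.limUnder_eq
    rw [hm]; exact ht
  refine ⟨m, ?_, ?_, ?_, ?_, ?_⟩
  · intro f g hf hg
    have := ((htend f hf).add (htend g hg)).limUnder_eq
    simpa [m, Pi.add_apply] using this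
  · intro c f hf
    have := ((htend f hf).const_mul c).limUnder_eq
    simpa [m, Pi.smul_apply, smul_eq_mul] using this
  · exact (tendsto_const_nhds : Filter.Tendsto (fun _ : Finset Γ => (1:ℝ)) (U : Filter (Finset Γ)) (nhds 1)).limUnder_eq
  · intro f C hC
    have ht := htend f ⟨C, hC⟩
    have h1 : m f ≤ C := le_of_tendsto ht (Filter.Eventually.of_forall fun A => (abs_le.mp (hC _)).2)
    have h2 : -C ≤ m f := ge_of_tendsto ht (Filter.Eventually.of_forall fun A => (abs_le.mp (hC _)).1)
    exact abs_le.mpr ⟨h2, h1⟩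
  · intro g f hf
    have hev : ∀ᶠ A in (U : Filter (Finset Γ)), f (g⁻¹ • pt A) = f (pt A) := by
      have : ∀ᶠ A in (atTop : Filter (Finset Γ)), g ∈ A := by
        filter_upwards [Filter.eventually_ge_atTop ({g} : Finset Γ)] with A hA
        exact hA (Finset.mem_singleton_self g)
      filter_upwards [this.filter_mono hU] with A hA
      have h1 : g • pt A = pt A := hfix g A hA
      have : g⁻¹ • pt A = pt A := by
        conv_lhs => rw [← h1]
        simp
      rw [this]
    have ht : Filter.Tendsto (fun A => f (g⁻¹ • pt A)) (U : Filter (Finset Γ)) (nhds (m f)) :=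
      (htend f hf).congr' (hev.mono fun A hA => hA.symm)
    exact ht.limUnder_eq
end

section
/- Let Γ be a group of orientation-preserving homeomorphisms of ℝ whose action is proximal and boundedly supported, and which is abelian. Then Γ is trivial. Consequently, if Γ is a nontrivial proximal boundedly supported group of orientation-preserving homeomorphisms of ℝ, then its derived subgroup Γ' is nontrivial. -/
/-- A group `Γ` of increasing (orientation-preserving) homeomorphisms of `ℝ`, modelled as order
isomorphisms, acts proximally if for all `a < b` and `c < d` some `g ∈ Γ` has
`g a < c < d < g b`. -/
def Proximal (Γ : Subgroup (ℝ ≃o ℝ)) : Prop :=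
  ∀ a b c d : ℝ, a < b → c < d → ∃ g ∈ Γ, g a < c ∧ d < g b

/-- `Γ` is boundedly supported: every element moves only points in a bounded set. -/
def BoundedlySupported (Γ : Subgroup (ℝ ≃o ℝ)) : Prop :=
  ∀ g ∈ Γ, ∃ M : ℝ, ∀ x : ℝ, g x ≠ x → |x| ≤ M

lemma stmt7_aux (Γ : Subgroup (ℝ ≃o ℝ)) (hprox : Proximal Γ) (hbs : BoundedlySupported Γ)
    (hab : ∀ a ∈ Γ, ∀ b ∈ Γ, a * b = b * a) : Γ = ⊥ := by
  rw [eq_bot_iff]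
  intro g hg
  rw [Subgroup.mem_bot]
  by_contra hne
  have hx : ∃ x : ℝ, g x ≠ x := by
    by_contra hall
    push_neg at hall
    exact hne (OrderIso.ext (funext hall))
  obtain ⟨x, hx⟩ := hx
  obtain ⟨M, hM⟩ := hbs g hg
  have hxM : |x| ≤ M := hM x hx
  have hM0 : 0 ≤ M := (abs_nonneg x).trans hxM
  obtain ⟨h, hh, h1, h2⟩ := hprox (-M - 1) (-M) (M - 1) M (by linarith) (by linarith)
  have hxge : -M ≤ x := neg_le_of_abs_le hxM
  have hhx : M < h x := lt_of_lt_of_le h2 (h.monotone hxge)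
  have fix : g (h x) = h x := by
    by_contra hc
    have := hM _ hc
    have : h x ≤ M := le_of_abs_le this
    linarith
  have comm := hab g hg h hh
  have happ : g (h x) = h (g x) := by
    have := congrFun (congrArg (fun f : ℝ ≃o ℝ => (f : ℝ → ℝ)) comm) x
    simpa using this
  have : h (g x) = h x := by rw [← happ, fix]
  exact hx (h.injective this)

/-- A proximal, boundedly supported, abelian group of orientation-preserving
homeomorphisms of `ℝ` is trivial; consequently a nontrivial proximal boundedly supported group
has nontrivial derived subgroup. -/
theorem stmt7 (Γ : Subgroup (ℝ ≃o ℝ)) (hprox : Proximal Γ) (hbs : BoundedlySupported Γ) :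
    ((∀ a ∈ Γ, ∀ b ∈ Γ, a * b = b * a) → Γ = ⊥) ∧
    (Γ ≠ ⊥ → ⁅Γ, Γ⁆ ≠ ⊥) := by
  refine ⟨stmt7_aux Γ hprox hbs, fun hne hcomm => ?_⟩
  apply hne
  apply stmt7_aux Γ hprox hbs
  intro a ha b hb
  have : @Bracket.bracket _ _ commutatorElement a b ∈ (⊥ : Subgroup (ℝ ≃o ℝ)) := by
    rw [← hcomm]
    exact Subgroup.commutator_mem_commutator ha hb
  rw [Subgroup.mem_bot, commutatorElement_eq_one_iff_mul_comm] at this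
  exact this
end

section
/- Let Γ be a proximal, boundedly supported group of orientation-preserving homeomorphisms of ℝ. Then the derived subgroup Γ' acts on ℝ without global fixed points: there is no x ∈ ℝ fixed by every element of Γ'. -/
open scoped commutatorElement

/-- The derived subgroup of a proximal, boundedly supported group of
orientation-preserving homeomorphisms of `ℝ` has no global fixed point. -/
theorem stmt8 (Γ : Subgroup (ℝ ≃o ℝ)) (hprox : Proximal Γ) (hbs : BoundedlySupported Γ) :
    ¬ ∃ x : ℝ, ∀ g ∈ ⁅Γ, Γ⁆, g x = x := by
  rintro ⟨x, hx⟩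
  -- a `g ∈ Γ` with `g x > x`
  obtain ⟨g, hgΓ, -, hg2⟩ := hprox (x - 1) x (x + 1) (x + 2) (by linarith) (by linarith)
  obtain ⟨M, hM⟩ := hbs g hgΓ
  -- an `h ∈ Γ` pushing `x` beyond the support of `g`
  obtain ⟨h, hhΓ, -, hh2⟩ := hprox (x - 1) x (M + 1) (M + 2) (by linarith) (by linarith)
  have hgh : g (h x) = h x := by
    by_contra hne
    have := hM (h x) hne
    have := le_abs_self (h x)
    linarith
  have hk : (⁅g⁻¹, h⁻¹⁆ : ℝ ≃o ℝ) x = x :=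
    hx _ (Subgroup.commutator_mem_commutator (inv_mem hgΓ) (inv_mem hhΓ))
  have hcalc : (⁅g⁻¹, h⁻¹⁆ : ℝ ≃o ℝ) x = g⁻¹ x := by
    have e1 : (⁅g⁻¹, h⁻¹⁆ : ℝ ≃o ℝ) x = g⁻¹ (h⁻¹ (g (h x))) := by
      simp [commutatorElement_def, mul_assoc]
    rw [e1, hgh]
    simp
  rw [hcalc] at hk
  have : g x = x := by
    conv_lhs => rw [← hk]
    simp
  linarith
end

section
/- In Thompson's group T of piecewise linear orientation-preserving homeomorphisms of the circle ℝ/ℤ, for every element g ∈ T there exist dyadic rational points x, y ∈ ℤ[1/2]/ℤ such that g ∈ T(x)·T(y), where T(z) denotes the subgroup of elements fixing pointwise some neighbourhood of z. -/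
open Filter

/-- A real number is dyadic rational. -/
def IsDyadic (x : ℝ) : Prop := ∃ (a : ℤ) (n : ℕ), x = (a : ℝ) / 2 ^ n

/-- `f : ℝ → ℝ` is a lift of an element of Thompson's group `T`: a strictly increasing bijection
commuting with the translation by `1`, which is piecewise linear with finitely many breakpoints
(modulo `ℤ`) at dyadic rationals, and off the breakpoints locally of the form `y ↦ 2^m y + c`
with `m ∈ ℤ` and `c` dyadic. -/
def IsTLift (f : ℝ → ℝ) : Prop :=
  StrictMono f ∧ Function.Bijective f ∧ (∀ x, f (x + 1) = f x + 1) ∧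
  ∃ B : Finset ℝ, (∀ p ∈ B, IsDyadic p) ∧
    ∀ x : ℝ, (∀ p ∈ B, ∀ k : ℤ, x ≠ p + k) →
      ∃ (m : ℤ) (c : ℝ), IsDyadic c ∧ ∀ᶠ y in nhds x, f y = 2 ^ m * y + c

/-- The circle `ℝ/ℤ`. -/
abbrev Circ := AddCircle (1 : ℝ)

/-- A bijection of the circle `ℝ/ℤ` is an element of Thompson's group `T` if it is induced by
some lift in `IsTLift`. -/
def IsTElem (φ : Circ ≃ Circ) : Prop :=
  ∃ f : ℝ → ℝ, IsTLift f ∧ ∀ x : ℝ, φ (x : ℝ) = ((f x : ℝ) : Circ)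

/-- `φ` fixes pointwise a neighbourhood of `z` (i.e. `φ` lies in the germ stabilizer `T(z)`). -/
def FixesNear (φ : Circ ≃ Circ) (z : Circ) : Prop :=
  ∀ᶠ w in nhds z, φ w = w

lemma IsDyadic.def {x : ℝ} : IsDyadic x ↔ ∃ (a : ℤ) (n : ℕ), x = (a : ℝ) / 2 ^ n := Iff.rfl

lemma IsDyadic.intCast (k : ℤ) : IsDyadic (k : ℝ) := ⟨k, 0, by simp⟩

lemma IsDyadic.zero : IsDyadic 0 := ⟨0, 0, by simp⟩
lemma IsDyadic.one : IsDyadic 1 := ⟨1, 0, by simp⟩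

lemma IsDyadic.add {x y : ℝ} (hx : IsDyadic x) (hy : IsDyadic y) : IsDyadic (x + y) := by
  obtain ⟨a, n, rfl⟩ := hx; obtain ⟨b, k, rfl⟩ := hy
  refine ⟨a * 2 ^ k + b * 2 ^ n, n + k, ?_⟩
  have h1 : (2:ℝ) ^ n ≠ 0 := by positivity
  have h2 : (2:ℝ) ^ k ≠ 0 := by positivity
  push_cast
  field_simp
  ring_nf

lemma IsDyadic.neg {x : ℝ} (hx : IsDyadic x) : IsDyadic (-x) := by
  obtain ⟨a, n, rfl⟩ := hx; exact ⟨-a, n, by push_cast; ring⟩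

lemma IsDyadic.sub {x y : ℝ} (hx : IsDyadic x) (hy : IsDyadic y) : IsDyadic (x - y) := by
  simpa [sub_eq_add_neg] using hx.add hy.neg

lemma IsDyadic.mul {x y : ℝ} (hx : IsDyadic x) (hy : IsDyadic y) : IsDyadic (x * y) := by
  obtain ⟨a, n, rfl⟩ := hx; obtain ⟨b, k, rfl⟩ := hy
  refine ⟨a * b, n + k, ?_⟩
  have h1 : (2:ℝ) ^ n ≠ 0 := by positivity
  have h2 : (2:ℝ) ^ k ≠ 0 := by positivity
  push_cast
  field_simp
  ring_nf

lemma IsDyadic.two_mul {x : ℝ} (hx : IsDyadic x) : IsDyadic (2 * x) := by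
  have : IsDyadic (2:ℝ) := by exact_mod_cast IsDyadic.intCast 2
  exact this.mul hx

lemma IsDyadic.div_two {x : ℝ} (hx : IsDyadic x) : IsDyadic (x / 2) := by
  obtain ⟨a, n, rfl⟩ := hx
  exact ⟨a, n + 1, by rw [pow_succ]; ring⟩

lemma IsDyadic.zpow_mul {x : ℝ} (m : ℤ) (hx : IsDyadic x) : IsDyadic (2 ^ m * x) := by
  induction m using Int.induction_on with
  | zero => simpa using hx
  | succ i ih =>
      have : (2:ℝ) ^ ((i:ℤ) + 1) * x = 2 * ((2:ℝ) ^ (i:ℤ) * x) := by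
        rw [zpow_add_one₀ (two_ne_zero)]; ring
      rw [this]; exact ih.two_mul
  | pred i ih =>
      have : (2:ℝ) ^ (-(i:ℤ) - 1) * x = ((2:ℝ) ^ (-(i:ℤ)) * x) / 2 := by
        rw [zpow_sub_one₀ (two_ne_zero)]; ring
      rw [this]; exact ih.div_two

lemma exists_dyadic_between {a b : ℝ} (h : a < b) : ∃ x, IsDyadic x ∧ a < x ∧ x < b := by
  obtain ⟨n, hn⟩ := exists_pow_lt_of_lt_one (sub_pos.2 h) (by norm_num : (1:ℝ)/2 < 1)
  have h2n : (0:ℝ) < 2 ^ n := by positivity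
  refine ⟨(⌊a * 2 ^ n⌋ + 1) / 2 ^ n, ⟨⌊a * 2 ^ n⌋ + 1, n, by push_cast; ring⟩, ?_, ?_⟩
  · rw [lt_div_iff₀ h2n]
    push_cast
    linarith [Int.lt_floor_add_one (a * 2 ^ n)]
  · rw [div_lt_iff₀ h2n]
    have h1 : ((⌊a * 2 ^ n⌋ : ℝ)) ≤ a * 2 ^ n := Int.floor_le _
    have h3 : ((1:ℝ)/2) ^ n = 1 / 2 ^ n := by rw [div_pow]; norm_num
    rw [h3] at hn
    have : 1 / (2:ℝ) ^ n < b - a := hn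
    rw [div_lt_iff₀ h2n] at this
    nlinarith

/-- A finite chain of dyadic nodes with power-of-two slopes. -/
def DChain (K : ℕ) (t v : ℕ → ℝ) : Prop :=
  (∀ i < K, t i < t (i+1) ∧ ∃ m : ℤ, v (i+1) - v i = 2 ^ m * (t (i+1) - t i)) ∧
  (∀ i ≤ K, IsDyadic (t i) ∧ IsDyadic (v i))

lemma DChain.v_mono {K t v} (h : DChain K t v) : ∀ i < K, v i < v (i+1) := by
  intro i hi
  obtain ⟨ht, m, hm⟩ := h.1 i hi
  have h2 : (0:ℝ) < 2 ^ m := by positivity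
  nlinarith [sub_pos.2 ht]

lemma dchain_single {p q P Q : ℝ} (m : ℤ) (hpq : p < q) (hs : Q - P = 2 ^ m * (q - p))
    (hp : IsDyadic p) (hq : IsDyadic q) (hP : IsDyadic P) (hQ : IsDyadic Q) :
    DChain 1 (fun i => if i = 0 then p else q) (fun i => if i = 0 then P else Q) := by
  constructor
  · intro i hi
    interval_cases i
    simpa using ⟨hpq, m, hs⟩
  · intro i hi
    interval_cases i <;> simp [hp, hq, hP, hQ]

lemma dyadic_div_pow (a : ℤ) (n : ℕ) : IsDyadic ((a:ℝ) / 2 ^ n) :=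
  IsDyadic.def.2 ⟨a, n, rfl⟩

lemma dchain_concat {K₁ K₂ : ℕ} {t₁ v₁ t₂ v₂ : ℕ → ℝ}
    (h₁ : DChain K₁ t₁ v₁) (h₂ : DChain K₂ t₂ v₂)
    (ht : t₁ K₁ = t₂ 0) (hv : v₁ K₁ = v₂ 0) :
    DChain (K₁ + K₂) (fun i => if i ≤ K₁ then t₁ i else t₂ (i - K₁))
      (fun i => if i ≤ K₁ then v₁ i else v₂ (i - K₁)) := by
  constructor
  · intro i hi
    rcases lt_or_ge i K₁ with h | h
    · simpa [show i ≤ K₁ from h.le, show i + 1 ≤ K₁ from h] using h₁.1 i h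
    · have hi1 : ¬ (i + 1 ≤ K₁) := by omega
      have hik : i - K₁ < K₂ := by omega
      have hsucc : i + 1 - K₁ = (i - K₁) + 1 := by omega
      rcases eq_or_lt_of_le h with rfl | hlt
      · simpa [le_refl, hi1, hsucc, ht, hv, Nat.sub_self] using h₂.1 0 (by omega)
      · have hni : ¬ (i ≤ K₁) := by omega
        simpa [hni, hi1, hsucc] using h₂.1 (i - K₁) hik
  · intro i hi
    rcases le_or_gt i K₁ with h | h
    · simpa [h] using h₁.2 i h
    · have : ¬ (i ≤ K₁) := by omega
      simpa [this] using h₂.2 (i - K₁) (by omega)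

lemma two_zpow_sub_mul (n k : ℕ) : (2:ℝ) ^ ((n:ℤ) - (k:ℤ)) * (1 / 2 ^ n) = 1 / 2 ^ k := by
  rw [zpow_sub₀ (two_ne_zero), zpow_natCast, zpow_natCast]
  have h1 : (2:ℝ) ^ n ≠ 0 := by positivity
  have h2 : (2:ℝ) ^ k ≠ 0 := by positivity
  field_simp

lemma DChain.reverse {K t v} (h : DChain K t v) : DChain K v t := by
  refine ⟨fun i hi => ⟨h.v_mono i hi, ?_⟩, fun i hi => ⟨(h.2 i hi).2, (h.2 i hi).1⟩⟩
  obtain ⟨ht, m, hm⟩ := (h.1 i hi)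
  refine ⟨-m, ?_⟩
  have h2 : (2:ℝ) ^ m ≠ 0 := by positivity
  rw [hm, zpow_neg]
  field_simp

/-- chain mapping an interval of length A/2^n to an interval of length 1/2^k -/
lemma dchain_to_unit (A : ℕ) (hA : 1 ≤ A) : ∀ (n k : ℕ) (p P : ℝ), IsDyadic p → IsDyadic P →
    ∃ t v : ℕ → ℝ, DChain A t v ∧ t 0 = p ∧ v 0 = P ∧
      t A = p + A / 2 ^ n ∧ v A = P + 1 / 2 ^ k := by
  induction A with
  | zero => omega
  | succ A ih =>
    intro n k p P hp hP
    rcases Nat.eq_zero_or_pos A with rfl | hA1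
    · -- single segment
      have hq : p < p + 1 / 2 ^ n := by
        have : (0:ℝ) < 1 / 2 ^ n := by positivity
        linarith
      have hs : (P + 1 / 2 ^ k) - P = 2 ^ ((n:ℤ) - (k:ℤ)) * ((p + 1 / 2 ^ n) - p) := by
        have := two_zpow_sub_mul n k
        rw [add_sub_cancel_left, add_sub_cancel_left, this]
      have hdy : IsDyadic ((1:ℝ) / 2 ^ n) := by simpa using dyadic_div_pow 1 n
      have hdy2 : IsDyadic ((1:ℝ) / 2 ^ k) := by simpa using dyadic_div_pow 1 k
      refine ⟨_, _, dchain_single _ hq hs hp (hp.add hdy) hP (hP.add hdy2), by simp, by simp,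
        by norm_num, by norm_num⟩
    · obtain ⟨t₁, v₁, hc1, ht0, hv0, htA, hvA⟩ := ih hA1 n (k+1) p P hp hP
      set q₁ : ℝ := p + A / 2 ^ n with hq₁
      set Q₁ : ℝ := P + 1 / 2 ^ (k+1) with hQ₁
      have hq1q : q₁ < p + (A+1 : ℕ) / 2 ^ n := by
        rw [hq₁]
        have : (0:ℝ) < 1 / 2 ^ n := by positivity
        push_cast
        rw [add_div]
        linarith
      have hs : (P + 1 / 2 ^ k) - Q₁ = 2 ^ ((n:ℤ) - ((k:ℤ)+1)) * ((p + (A+1:ℕ) / 2 ^ n) - q₁) := by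
        have h1 := two_zpow_sub_mul n (k+1)
        push_cast at h1 ⊢
        rw [hQ₁, hq₁]
        have h2 : (P + 1/2^k) - (P + 1/2^(k+1)) = 1/2^(k+1) := by
          rw [pow_succ]; field_simp; ring
        have h3 : (p + ((A:ℝ)+1)/2^n) - (p + (A:ℝ)/2^n) = 1/2^n := by
          rw [add_div]; ring
        rw [h2, h3, ← h1]
      have hdyq : IsDyadic q₁ := hp.add (by simpa using dyadic_div_pow A n)
      have hdyQ : IsDyadic Q₁ := hP.add (by simpa using dyadic_div_pow 1 (k+1))
      have hdyq' : IsDyadic (p + ((A:ℕ)+1:ℝ) / 2 ^ n) := by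
        have := dyadic_div_pow ((A:ℤ)+1) n
        push_cast at this
        exact hp.add this
      have hdyQ' : IsDyadic (P + (1:ℝ) / 2 ^ k) := hP.add (by simpa using dyadic_div_pow 1 k)
      have hc2 := dchain_single ((n:ℤ) - ((k:ℤ)+1)) hq1q hs hdyq (by push_cast at hdyq' ⊢; exact hdyq') hdyQ hdyQ'
      have hcc := dchain_concat hc1 hc2 (by simp [htA]) (by simp [hvA])
      refine ⟨_, _, hcc, by simp [ht0], by simp [hv0], ?_, ?_⟩
      · have : ¬ (A + 1 ≤ A) := by omega
        simp only [this, if_false, Nat.add_sub_cancel_left]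
        push_cast
        simp
      · have : ¬ (A + 1 ≤ A) := by omega
        simp only [this, if_false, Nat.add_sub_cancel_left]
        simp

/-- Any two nondegenerate dyadic intervals are connected by a dyadic chain. -/
lemma dchain_general {p q P Q : ℝ} (hp : IsDyadic p) (hq : IsDyadic q) (hP : IsDyadic P)
    (hQ : IsDyadic Q) (hpq : p < q) (hPQ : P < Q) :
    ∃ (K : ℕ) (t v : ℕ → ℝ), 0 < K ∧ DChain K t v ∧
      t 0 = p ∧ v 0 = P ∧ t K = q ∧ v K = Q := by
  obtain ⟨a, n, han⟩ := IsDyadic.def.1 (hq.sub hp)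
  obtain ⟨b, m, hbm⟩ := IsDyadic.def.1 (hQ.sub hP)
  have h2n : (0:ℝ) < 2 ^ n := by positivity
  have h2m : (0:ℝ) < 2 ^ m := by positivity
  have hsub1 : (0:ℝ) < (a:ℝ)/2^n := han ▸ sub_pos.2 hpq
  have hsub2 : (0:ℝ) < (b:ℝ)/2^m := hbm ▸ sub_pos.2 hPQ
  have ha : 0 < a := by
    have := mul_pos hsub1 h2n
    rw [div_mul_cancel₀ _ (ne_of_gt h2n)] at this
    exact_mod_cast this
  have hb : 0 < b := by
    have := mul_pos hsub2 h2m
    rw [div_mul_cancel₀ _ (ne_of_gt h2m)] at this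
    exact_mod_cast this
  set A : ℕ := a.toNat with hA
  set B : ℕ := b.toNat with hB
  have hAa : (A:ℝ) = (a:ℝ) := by exact_mod_cast congrArg Int.cast (Int.toNat_of_nonneg ha.le)
  have hBb : (B:ℝ) = (b:ℝ) := by exact_mod_cast congrArg Int.cast (Int.toNat_of_nonneg hb.le)
  have hA1 : 1 ≤ A := by omega
  have hB1 : 1 ≤ B := by omega
  have hcastA : ((2*A-1 : ℕ):ℝ) = 2*(A:ℝ) - 1 := by
    push_cast [Nat.cast_sub (by omega : 1 ≤ 2*A)]
    ring
  have hcastB : ((2*B-1 : ℕ):ℝ) = 2*(B:ℝ) - 1 := by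
    push_cast [Nat.cast_sub (by omega : 1 ≤ 2*B)]
    ring
  obtain ⟨t₁, v₁, hc1, ht10, hv10, ht1K, hv1K⟩ :=
    dchain_to_unit (2*A-1) (by omega) (n+1) (m+1) p P hp hP
  have hdy1 : IsDyadic (p + ((2*A-1:ℕ):ℝ) / 2 ^ (n+1)) := by
    refine hp.add ?_
    have := dyadic_div_pow ((2*A-1:ℕ):ℤ) (n+1)
    rw [Int.cast_natCast] at this
    exact this
  have hdy2 : IsDyadic (P + 1 / 2 ^ (m+1)) := hP.add (by simpa using dyadic_div_pow 1 (m+1))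
  obtain ⟨v₂, t₂, hc2', hv20, ht20, hv2K, ht2K⟩ :=
    dchain_to_unit (2*B-1) (by omega) (m+1) (n+1) (P + 1/2^(m+1)) (p + ((2*A-1:ℕ):ℝ)/2^(n+1))
      hdy2 hdy1
  have hc2 : DChain (2*B-1) t₂ v₂ := hc2'.reverse
  have hcc := dchain_concat hc1 hc2 (by rw [ht1K, ht20]) (by rw [hv1K, hv20])
  refine ⟨(2*A-1) + (2*B-1), _, _, by omega, hcc, by simp [ht10], by simp [hv10], ?_, ?_⟩
  · have hni : ¬ ((2*A-1) + (2*B-1) ≤ 2*A-1) := by omega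
    simp only [hni, if_false, Nat.add_sub_cancel_left]
    rw [ht2K, hcastA]
    have hq' : q = p + (a:ℝ)/2^n := by rw [← han]; ring
    rw [hq', ← hAa]
    rw [pow_succ]
    field_simp
    ring
  · have hni : ¬ ((2*A-1) + (2*B-1) ≤ 2*A-1) := by omega
    simp only [hni, if_false, Nat.add_sub_cancel_left]
    rw [hv2K, hcastB]
    have hQ' : Q = P + (b:ℝ)/2^m := by rw [← hbm]; ring
    rw [hQ', ← hBb]
    rw [pow_succ]
    field_simp
    ring

section Gadget

variable {N : ℕ} {t v : ℕ → ℝ}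

/-- The slope of segment `i`. -/
noncomputable def cSlope (t v : ℕ → ℝ) (i : ℕ) : ℝ := (v (i+1) - v i) / (t (i+1) - t i)

/-- PL interpolation of the chain on one period. -/
noncomputable def chainFun (N : ℕ) (t v : ℕ → ℝ) (x : ℝ) : ℝ :=
  v 0 + ∑ i ∈ Finset.range N, cSlope t v i * (max (t i) (min x (t (i+1))) - t i)

/-- The periodic lift. -/
noncomputable def chainLift (N : ℕ) (t v : ℕ → ℝ) (x : ℝ) : ℝ :=
  chainFun N t v (x - ⌊x - t 0⌋) + ⌊x - t 0⌋

variable (hc : DChain N t v)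
include hc

lemma tmono {i j : ℕ} (hij : i ≤ j) (hj : j ≤ N) : t i ≤ t j := by
  induction j with
  | zero => simp_all
  | succ j ih =>
    rcases Nat.eq_or_lt_of_le hij with rfl | hlt
    · exact le_rfl
    · exact le_trans (ih (by omega) (by omega)) (hc.1 j (by omega)).1.le

lemma tlt {i j : ℕ} (hij : i < j) (hj : j ≤ N) : t i < t j :=
  lt_of_lt_of_le (hc.1 i (by omega)).1 (tmono hc (by omega) hj)

lemma slope_pos {i : ℕ} (hi : i < N) : 0 < cSlope t v i :=
  div_pos (sub_pos.2 (hc.v_mono i hi)) (sub_pos.2 (hc.1 i hi).1)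

lemma vmono {i j : ℕ} (hij : i ≤ j) (hj : j ≤ N) : v i ≤ v j := by
  induction j with
  | zero => simp_all
  | succ j ih =>
    rcases Nat.eq_or_lt_of_le hij with rfl | hlt
    · exact le_rfl
    · exact le_trans (ih (by omega) (by omega)) (hc.v_mono j (by omega)).le

/-- Segment formula. -/
lemma chainFun_segment {i : ℕ} (hi : i < N) {x : ℝ} (hx : x ∈ Set.Icc (t i) (t (i+1))) :
    chainFun N t v x = v i + cSlope t v i * (x - t i) := by
  obtain ⟨hx1, hx2⟩ := hx
  unfold chainFun
  have hsplit : Finset.range N = Finset.range (i+1) ∪ Finset.Ico (i+1) N := by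
    rw [Finset.range_eq_Ico, Finset.range_eq_Ico, Finset.Ico_union_Ico_eq_Ico (by omega) (by omega)]
  rw [hsplit, Finset.sum_union (by
    rw [Finset.range_eq_Ico]
    exact Finset.Ico_disjoint_Ico_consecutive 0 (i+1) N)]
  rw [Finset.sum_range_succ]
  have hterm_i : cSlope t v i * (max (t i) (min x (t (i+1))) - t i) = cSlope t v i * (x - t i) := by
    rw [min_eq_left hx2, max_eq_right hx1]
  have hsum1 : ∑ j ∈ Finset.range i, cSlope t v j * (max (t j) (min x (t (j+1))) - t j)
      = ∑ j ∈ Finset.range i, (v (j+1) - v j) := by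
    apply Finset.sum_congr rfl
    intro j hj
    have hj' : j < i := Finset.mem_range.1 hj
    have h1 : t (j+1) ≤ x := le_trans (tmono hc (by omega) (by omega)) hx1
    rw [min_eq_right h1, max_eq_right (hc.1 j (by omega)).1.le]
    unfold cSlope
    rw [div_mul_cancel₀]
    exact sub_ne_zero.2 (ne_of_gt (hc.1 j (by omega)).1)
  have hsum2 : ∑ j ∈ Finset.Ico (i+1) N, cSlope t v j * (max (t j) (min x (t (j+1))) - t j) = 0 := by
    apply Finset.sum_eq_zero
    intro j hj
    obtain ⟨hj1, hj2⟩ := Finset.mem_Ico.1 hj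
    have h1 : x ≤ t j := le_trans hx2 (tmono hc hj1 (by omega))
    rw [min_eq_left (le_trans h1 (tmono hc (by omega) (by omega))), max_eq_left h1]
    simp
  rw [hsum1, hsum2, hterm_i, Finset.sum_range_sub]
  ring

lemma chainFun_node {i : ℕ} (hi : i ≤ N) (hN : 0 < N) : chainFun N t v (t i) = v i := by
  rcases Nat.eq_or_lt_of_le hi with rfl | hlt
  · obtain ⟨j, rfl⟩ : ∃ j, i = j + 1 := ⟨i - 1, by omega⟩
    have h := chainFun_segment hc (show j < j + 1 by omega)
      (x := t (j+1)) ⟨(hc.1 j (by omega)).1.le, le_rfl⟩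
    rw [h]
    unfold cSlope
    rw [div_mul_cancel₀]
    · ring
    · exact sub_ne_zero.2 (ne_of_gt (hc.1 j (by omega)).1)
  · rw [chainFun_segment hc hlt ⟨le_rfl, (hc.1 i hlt).1.le⟩]
    ring

lemma chainFun_mono : Monotone (chainFun N t v) := by
  intro x y hxy
  apply add_le_add le_rfl
  apply Finset.sum_le_sum
  intro i hi
  have hs := (slope_pos hc (Finset.mem_range.1 hi)).le
  have hmx : max (t i) (min x (t (i+1))) ≤ max (t i) (min y (t (i+1))) :=
    max_le_max le_rfl (min_le_min hxy le_rfl)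
  exact mul_le_mul_of_nonneg_left (sub_le_sub_right hmx _) hs

omit hc in
lemma find_seg (w : ℕ → ℝ) (M : ℕ) (hM : 0 < M) (z : ℝ) (h1 : w 0 ≤ z) (h2 : z ≤ w M) :
    ∃ i < M, w i ≤ z ∧ z ≤ w (i+1) := by
  induction M with
  | zero => omega
  | succ M ih =>
    rcases Nat.eq_zero_or_pos M with rfl | hM'
    · exact ⟨0, by omega, h1, h2⟩
    · rcases le_or_gt z (w M) with h | h
      · obtain ⟨i, hi, hi2⟩ := ih hM' h
        exact ⟨i, by omega, hi2⟩
      · exact ⟨M, by omega, h.le, h2⟩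

lemma find_seg' (hN : 0 < N) {x y : ℝ} (hx0 : t 0 ≤ x) (hxy : x < y) (hyN : y ≤ t N) :
    ∃ i < N, t i ≤ x ∧ x < t (i+1) := by
  obtain ⟨i, hi, h1, h2⟩ := find_seg t N hN x hx0 (le_trans hxy.le hyN)
  rcases lt_or_eq_of_le h2 with h | h
  · exact ⟨i, hi, h1, h⟩
  · have hi1 : i + 1 < N := by
      by_contra hcon
      have hiN : i + 1 = N := by omega
      rw [hiN] at h
      rw [h] at hxy
      exact absurd (lt_of_lt_of_le hxy hyN) (lt_irrefl _)
    exact ⟨i+1, hi1, h.ge, by rw [h]; exact (hc.1 (i+1) hi1).1⟩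

lemma chainFun_strictMonoOn : StrictMonoOn (chainFun N t v) (Set.Icc (t 0) (t N)) := by
  rintro x ⟨hx0, hxN⟩ y ⟨hy0, hyN⟩ hxy
  have hN : 0 < N := by
    by_contra h
    have h0 : N = 0 := by omega
    subst h0
    exact absurd (lt_of_le_of_lt hx0 (lt_of_lt_of_le hxy hyN)) (lt_irrefl _)
  obtain ⟨i, hi, hxi1, hxi2⟩ := find_seg' hc hN hx0 hxy hyN
  set z := min y (t (i+1)) with hz
  have hxz : x < z := lt_min hxy hxi2
  have h1 : chainFun N t v x < chainFun N t v z := by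
    rw [chainFun_segment hc hi ⟨hxi1, hxi2.le⟩,
      chainFun_segment hc hi ⟨le_trans hxi1 hxz.le, min_le_right _ _⟩]
    have hs := slope_pos hc hi
    nlinarith
  exact lt_of_lt_of_le h1 (chainFun_mono hc (min_le_left y _))

variable (hpt : t N = t 0 + 1) (hpv : v N = v 0 + 1) (hN : 0 < N)
include hpt hpv hN

omit hpt hpv hN in
lemma lift_base (x : ℝ) : t 0 ≤ x - ⌊x - t 0⌋ ∧ x - ⌊x - t 0⌋ < t 0 + 1 := by
  constructor
  · have := Int.floor_le (x - t 0)
    linarith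
  · have := Int.lt_floor_add_one (x - t 0)
    push_cast at this ⊢
    linarith

omit hc hpt hpv hN in
lemma chainLift_add_one (x : ℝ) : chainLift N t v (x + 1) = chainLift N t v x + 1 := by
  unfold chainLift
  have h1 : x + 1 - t 0 = (x - t 0) + 1 := by ring
  rw [h1, Int.floor_add_one]
  have h2 : x + 1 - ((⌊x - t 0⌋ + 1 : ℤ) : ℝ) = x - ⌊x - t 0⌋ := by push_cast; ring
  rw [h2]
  push_cast
  ring

lemma chainLift_strictMono : StrictMono (chainLift N t v) := by
  intro x y hxy
  have hrx := lift_base hc (t := t) (v := v) x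
  have hry := lift_base hc (t := t) (v := v) y
  set k := ⌊x - t 0⌋ with hk
  set l := ⌊y - t 0⌋ with hl
  have hkl : k ≤ l := Int.floor_le_floor (by linarith)
  have hIccx : x - (k:ℝ) ∈ Set.Icc (t 0) (t N) := ⟨hrx.1, by rw [hpt]; linarith [hrx.2]⟩
  have hIccy : y - (l:ℝ) ∈ Set.Icc (t 0) (t N) := ⟨hry.1, by rw [hpt]; linarith [hry.2]⟩
  unfold chainLift
  change chainFun N t v (x - (k:ℝ)) + (k:ℝ) < chainFun N t v (y - (l:ℝ)) + (l:ℝ)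
  rcases eq_or_lt_of_le hkl with heq | hlt
  · have hkr : (k:ℝ) = (l:ℝ) := by exact_mod_cast heq
    have h1 : x - (k:ℝ) < y - (l:ℝ) := by rw [← hkr]; linarith
    have h2 := chainFun_strictMonoOn hc hIccx hIccy h1
    linarith
  · have h1 : chainFun N t v (x - k) < chainFun N t v (t N) :=
      chainFun_strictMonoOn hc hIccx ⟨tmono hc (by omega) le_rfl, le_rfl⟩
        (by rw [hpt]; exact hrx.2)
    have h2 : chainFun N t v (t 0) ≤ chainFun N t v (y - l) := chainFun_mono hc hry.1
    rw [chainFun_node hc le_rfl hN, chainFun_node hc (by omega) hN] at *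
    have hkl1 : (k:ℝ) + 1 ≤ (l:ℝ) := by exact_mod_cast hlt
    rw [hpv] at h1
    linarith

lemma chainLift_surjective : Function.Surjective (chainLift N t v) := by
  intro z
  set l := ⌊z - v 0⌋ with hl
  have hw1 : v 0 ≤ z - l := by
    have := Int.floor_le (z - v 0); linarith
  have hw2 : z - l < v 0 + 1 := by
    have := Int.lt_floor_add_one (z - v 0); push_cast at this ⊢; linarith
  obtain ⟨i, hi, h1, h2⟩ := find_seg v N hN (z - l) hw1 (by rw [hpv]; linarith)
  have hs := slope_pos hc hi
  have hdt := sub_pos.2 (hc.1 i hi).1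
  set s := cSlope t v i with hsd
  set x₀ := t i + (z - l - v i)/s with hx₀
  have hcancel : s * (t (i+1) - t i) = v (i+1) - v i := by
    rw [hsd]; unfold cSlope; rw [div_mul_cancel₀ _ (ne_of_gt hdt)]
  have hx₀1 : t i ≤ x₀ := by
    rw [hx₀]
    have : 0 ≤ (z - l - v i)/s := div_nonneg (by linarith) hs.le
    linarith
  have hx₀2 : x₀ ≤ t (i+1) := by
    rw [hx₀]
    have : (z - l - v i)/s ≤ t (i+1) - t i := by
      rw [div_le_iff₀ hs, mul_comm, hcancel]
      linarith
    linarith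
  have hform : chainFun N t v x₀ = z - l := by
    rw [chainFun_segment hc hi ⟨hx₀1, hx₀2⟩, hx₀]
    field_simp
    ring
  have hx₀lt : x₀ < t N := by
    rcases Nat.eq_or_lt_of_le (show i + 1 ≤ N by omega) with heq | hlt2
    · have hzl : z - l < v (i+1) := by rw [heq, hpv]; linarith
      rw [hx₀]
      have : (z - l - v i)/s < t (i+1) - t i := by
        rw [div_lt_iff₀ hs, mul_comm, hcancel]
        linarith
      rw [← heq]
      linarith
    · exact lt_of_le_of_lt hx₀2 (tlt hc (by omega) le_rfl)
  refine ⟨x₀ + l, ?_⟩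
  unfold chainLift
  have hfl : ⌊x₀ + (l:ℝ) - t 0⌋ = l := by
    rw [Int.floor_eq_iff]
    constructor
    · push_cast; linarith [tmono hc (show 0 ≤ i by omega) (by omega)]
    · push_cast
      rw [hpt] at hx₀lt
      linarith
  rw [hfl]
  have : x₀ + (l:ℝ) - l = x₀ := by ring
  rw [this, hform]
  ring

omit hc hpt hpv hN in
lemma chainLift_base_eq {y : ℝ} (h1 : t 0 ≤ y) (h2 : y < t 0 + 1) :
    chainLift N t v y = chainFun N t v y := by
  unfold chainLift
  have : ⌊y - t 0⌋ = 0 := by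
    rw [Int.floor_eq_iff] <;> push_cast <;> constructor <;> linarith
  rw [this]
  push_cast
  ring_nf

omit hpt hpv hN in
lemma chainLift_segment_base {i : ℕ} (hi : i < N) {y : ℝ} (hy : y ∈ Set.Icc (t i) (t (i+1)))
    (h2 : y < t 0 + 1) :
    chainLift N t v y = v i + cSlope t v i * (y - t i) := by
  rw [chainLift_base_eq (le_trans (tmono hc (by omega) (by omega)) hy.1) h2,
    chainFun_segment hc hi hy]

lemma chainLift_isTLift : IsTLift (chainLift N t v) := by
  refine ⟨chainLift_strictMono hc hpt hpv hN,
    ⟨(chainLift_strictMono hc hpt hpv hN).injective, chainLift_surjective hc hpt hpv hN⟩,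
    chainLift_add_one, ?_⟩
  refine ⟨(Finset.range (N+1)).image t, ?_, ?_⟩
  · intro p hp
    obtain ⟨i, hi, rfl⟩ := Finset.mem_image.1 hp
    have hi' := Finset.mem_range.1 hi
    exact (hc.2 i (by omega)).1
  · intro x hx
    set k := ⌊x - t 0⌋ with hk
    have hrx := lift_base hc (t := t) (v := v) x
    have hne : ∀ i ≤ N, x - (k:ℝ) ≠ t i := by
      intro i hi hcon
      exact hx (t i) (Finset.mem_image.2 ⟨i, Finset.mem_range.2 (by omega), rfl⟩) k
        (by rw [← hcon]; ring)
    have hr0 : t 0 < x - (k:ℝ) := lt_of_le_of_ne hrx.1 (fun h => hne 0 (by omega) h.symm)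
    have hrN : x - (k:ℝ) < t N := by rw [hpt]; exact hrx.2
    obtain ⟨i, hi, hi1, hi2⟩ := find_seg' hc hN hrx.1 hrN le_rfl
    have hi1' : t i < x - (k:ℝ) := lt_of_le_of_ne hi1 (fun h => hne i (by omega) h.symm)
    obtain ⟨m, hm⟩ := (hc.1 i hi).2
    have hdt : t (i+1) - t i ≠ 0 := sub_ne_zero.2 (ne_of_gt (hc.1 i hi).1)
    have hsm : cSlope t v i = 2 ^ m := by
      unfold cSlope
      rw [hm, mul_div_cancel_right₀ _ hdt]
    refine ⟨m, v i + k - 2 ^ m * (t i + k), ?_, ?_⟩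
    · exact (((hc.2 i (by omega)).2.add (IsDyadic.intCast k)).sub
        (IsDyadic.zpow_mul m (((hc.2 i (by omega)).1).add (IsDyadic.intCast k))))
    · have hmem : x ∈ Set.Ioo (t i + (k:ℝ)) (t (i+1) + (k:ℝ)) := by
        constructor
        · linarith
        · linarith
      filter_upwards [Ioo_mem_nhds hmem.1 hmem.2] with y hy
      obtain ⟨hy1, hy2⟩ := hy
      have hfl : ⌊y - t 0⌋ = k := by
        rw [Int.floor_eq_iff]
        constructor
        · have : t 0 ≤ t i := tmono hc (by omega) (by omega)
          push_cast
          linarith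
        · have : t (i+1) ≤ t N := tmono hc (by omega) le_rfl
          rw [hpt] at this
          push_cast
          linarith
      unfold chainLift
      rw [hfl]
      rw [chainFun_segment hc hi ⟨by linarith, by linarith⟩, hsm]
      push_cast
      ring

end Gadget


lemma IsTLift.sub_int {f : ℝ → ℝ} (hf : IsTLift f) (k : ℤ) : IsTLift (fun x => f x - k) := by
  obtain ⟨h1, h2, h3, B, hB, hloc⟩ := hf
  refine ⟨fun x y hxy => by simpa using h1 hxy, ⟨?_, ?_⟩, fun x => by simp only [h3]; ring,
    B, hB, ?_⟩
  · intro x y hxy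
    simp only at hxy
    exact h2.1 (by linarith)
  · intro z
    obtain ⟨x, hx⟩ := h2.2 (z + k)
    exact ⟨x, by simp only [hx]; ring⟩
  · intro x hx
    obtain ⟨m, c, hc, hev⟩ := hloc x hx
    refine ⟨m, c - k, hc.sub (IsDyadic.intCast k), ?_⟩
    filter_upwards [hev] with y hy
    simp only [hy]
    ring
section Reg
variable {f : ℝ → ℝ} (hf : IsTLift f)
include hf

/-- the order isomorphism attached to a T-lift -/
noncomputable def tIso (hf : IsTLift f) : ℝ ≃o ℝ :=
  StrictMono.orderIsoOfSurjective f hf.1 hf.2.1.2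

lemma tIso_apply (x : ℝ) : tIso hf x = f x := rfl

lemma tlift_continuous : Continuous f := by
  have h := (tIso hf).toHomeomorph.continuous
  exact h

lemma tlift_add_int (x : ℝ) (k : ℤ) : f (x + k) = f x + k := by
  induction k using Int.induction_on with
  | zero => simp
  | succ i ih =>
    have := hf.2.2.1 (x + i)
    push_cast
    push_cast at ih this
    rw [show x + (i + 1) = (x + i) + 1 by ring, this, ih]
    ring
  | pred i ih =>
    have := hf.2.2.1 (x + (-(i:ℝ) - 1))
    push_cast
    push_cast at ih this
    rw [show x + (-(i:ℝ) - 1) + 1 = x + -(i:ℝ) by ring] at this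
    rw [show x + (-(i:ℝ) - 1) = (x + -(i:ℝ)) - 1 by ring]
    have h2 : f (x + -(i:ℝ) - 1) = f (x + -(i:ℝ)) - 1 := by
      rw [show x + -(i:ℝ) - 1 = x + (-(i:ℝ) - 1) by ring]
      linarith [this]
    rw [show x + -(i:ℝ) - 1 = x + -(i:ℝ) - 1 from rfl, h2, ih]
    ring

/-- Local affine structure to the right of every point. -/
lemma tlift_right_structure (x : ℝ) :
    ∃ δ > 0, ∃ (m : ℤ) (c : ℝ), IsDyadic c ∧
      (∀ y ∈ Set.Ioo x (x + δ), ∀ᶠ w in nhds y, f w = 2 ^ m * w + c) := by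
  obtain ⟨hmono, hbij, hper, B, hBdy, hloc⟩ := hf
  classical
  set F : Finset ℝ := B.image (fun q => q + ((⌊x - q⌋ + 1 : ℤ) : ℝ)) with hF
  set G : Finset ℝ := F.filter (fun b => x < b) with hG
  set δ : ℝ := if h : G.Nonempty then min (G.min' h - x) 1 else 1 with hδ
  have hδpos : 0 < δ := by
    rw [hδ]
    split_ifs with h
    · refine lt_min ?_ one_pos
      have h3 : x < G.min' h := (Finset.mem_filter.1 (G.min'_mem h)).2
      linarith
    · exact one_pos
  have hδ1 : δ ≤ 1 := by
    rw [hδ]; split_ifs with h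
    · exact min_le_right _ _
    · exact le_rfl
  have hfree : ∀ y ∈ Set.Ioo x (x + δ), ∀ q ∈ B, ∀ k : ℤ, y ≠ q + k := by
    rintro y ⟨hy1, hy2⟩ q hq k rfl
    have hk : k = ⌊x - q⌋ + 1 := by
      have h1 : (⌊x - q⌋ : ℤ) < k := by
        rw [Int.floor_lt]
        push_cast
        linarith
      have h2 : (k : ℝ) - 1 ≤ x - q := by
        have : (q:ℝ) + k < x + 1 := by linarith
        linarith
      have h3 : k - 1 ≤ ⌊x - q⌋ := by
        rw [Int.le_floor]
        push_cast
        linarith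
      omega
    have hyF : q + (k:ℝ) ∈ G := by
      rw [hG, Finset.mem_filter]
      refine ⟨?_, hy1⟩
      rw [hF, Finset.mem_image]
      exact ⟨q, hq, by rw [hk]⟩
    have hmin : G.min' ⟨_, hyF⟩ ≤ q + k := Finset.min'_le _ _ hyF
    have : δ ≤ q + (k:ℝ) - x := by
      rw [hδ]
      rw [dif_pos ⟨_, hyF⟩]
      exact le_trans (min_le_left _ _) (by linarith)
    linarith
  -- local data at the midpoint
  have hy₀ : x + δ/2 ∈ Set.Ioo x (x + δ) := by constructor <;> linarith
  obtain ⟨m, c, hcdy, hev⟩ := hloc _ (hfree _ hy₀)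
  refine ⟨δ, hδpos, m, c, hcdy, ?_⟩
  set U : Set ℝ := {z | ∀ᶠ w in nhds z, f w = 2 ^ m * w + c} with hU
  have hUopen : IsOpen U := by
    rw [hU]
    exact isOpen_setOf_eventually_nhds
  have hUinter : (U ∩ Set.Ioo x (x + δ)).Nonempty := ⟨x + δ/2, hev, hy₀⟩
  have hkey : Set.Ioo x (x + δ) ⊆ U := by
    apply isPreconnected_Ioo.subset_of_closure_inter_subset hUopen
      (by obtain ⟨w, h1, h2⟩ := hUinter; exact ⟨w, h2, h1⟩)
    rintro z ⟨hzU, hzI⟩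
    obtain ⟨m', c', hc'dy, hev'⟩ := hloc _ (hfree _ hzI)
    rw [Metric.eventually_nhds_iff] at hev'
    obtain ⟨ε, hε, hball⟩ := hev'
    obtain ⟨w, hwU, hwz⟩ := Metric.mem_closure_iff.1 hzU (ε/2) (by linarith)
    have hevw' : ∀ᶠ y in nhds w, f y = 2 ^ m' * y + c' := by
      rw [Metric.eventually_nhds_iff]
      refine ⟨ε/2, by linarith, fun y hy => hball ?_⟩
      have h1 := dist_triangle y w z
      have h2 := dist_comm w z
      linarith
    have haff : ∀ᶠ y in nhds w, (2:ℝ) ^ m * y + c = 2 ^ m' * y + c' := by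
      filter_upwards [(hwU : ∀ᶠ y in nhds w, f y = 2 ^ m * y + c), hevw'] with y h1 h2
      rw [← h1, h2]
    rw [Metric.eventually_nhds_iff] at haff
    obtain ⟨r, hr, hr2⟩ := haff
    have e1 := hr2 (y := w) (by simp [dist_self, hr])
    have e2 := hr2 (y := w + r/2) (by
      rw [Real.dist_eq, show w + r/2 - w = r/2 by ring, abs_of_nonneg (by linarith)]
      linarith)
    have hslope : (2:ℝ) ^ m = 2 ^ m' := by nlinarith
    have hcc : c = c' := by rw [hslope] at e1; linarith
    show ∀ᶠ w in nhds z, f w = 2 ^ m * w + c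
    refine Metric.eventually_nhds_iff.2 ⟨ε, hε, fun {y} hy => ?_⟩
    rw [hslope, hcc]
    exact hball hy
  intro y hy
  exact hkey hy

/-- Value at the point itself, by continuity from the right. -/
lemma tlift_point_structure (x : ℝ) :
    ∃ (m : ℤ) (c : ℝ), IsDyadic c ∧ f x = 2 ^ m * x + c := by
  obtain ⟨δ, hδ, m, c, hcdy, hev⟩ := tlift_right_structure hf x
  refine ⟨m, c, hcdy, ?_⟩
  have h1 : Filter.Tendsto f (nhdsWithin x (Set.Ioi x)) (nhds (f x)) :=
    ((tlift_continuous hf).continuousAt).continuousWithinAt.tendsto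
  have h2 : Filter.Tendsto f (nhdsWithin x (Set.Ioi x)) (nhds (2 ^ m * x + c)) := by
    have haff : Filter.Tendsto (fun y => (2:ℝ) ^ m * y + c) (nhdsWithin x (Set.Ioi x))
        (nhds (2 ^ m * x + c)) := by
      apply Filter.Tendsto.mono_left _ nhdsWithin_le_nhds
      exact (((continuous_const.mul continuous_id).add continuous_const).tendsto x)
    apply haff.congr'
    filter_upwards [Ioo_mem_nhdsGT_of_mem (⟨le_rfl, by linarith⟩ : x ∈ Set.Ico x (x + δ))] with y hy
    exact ((hev y hy).self_of_nhds).symm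
  exact tendsto_nhds_unique h1 h2

lemma tlift_dyadic {x : ℝ} (hx : IsDyadic x) : IsDyadic (f x) := by
  obtain ⟨m, c, hcdy, hfx⟩ := tlift_point_structure hf x
  rw [hfx]
  exact (IsDyadic.zpow_mul m hx).add hcdy

lemma tlift_symm_dyadic {p : ℝ} (hp : IsDyadic p) : IsDyadic ((tIso hf).symm p) := by
  obtain ⟨m, c, hcdy, hfx⟩ := tlift_point_structure hf ((tIso hf).symm p)
  have hfp : f ((tIso hf).symm p) = p := (tIso hf).apply_symm_apply p
  rw [hfp] at hfx
  have : (tIso hf).symm p = 2 ^ (-m) * (p - c) := by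
    rw [hfx]
    rw [zpow_neg]
    have h2 : (2:ℝ) ^ m ≠ 0 := by positivity
    field_simp
    rw [← hfx]; linarith [hfx]
  rw [this]
  exact IsDyadic.zpow_mul _ (hp.sub hcdy)

lemma tlift_symm_add_int (z : ℝ) (k : ℤ) : (tIso hf).symm (z + k) = (tIso hf).symm z + k := by
  apply (tIso hf).injective
  rw [OrderIso.apply_symm_apply]
  have : tIso hf ((tIso hf).symm z + (k:ℝ)) = f ((tIso hf).symm z + (k:ℝ)) := rfl
  rw [this, tlift_add_int hf, ← tIso_apply hf, OrderIso.apply_symm_apply]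

end Reg

section Closure
variable {f g : ℝ → ℝ} (hf : IsTLift f) (hg : IsTLift g)
include hf hg

/-- T-lifts are closed under composition. -/
lemma IsTLift.comp : IsTLift (f ∘ g) := by
  classical
  obtain ⟨Bf, hBf, hlocf⟩ := hf.2.2.2
  obtain ⟨Bg, hBg, hlocg⟩ := hg.2.2.2
  refine ⟨hf.1.comp hg.1, hf.2.1.comp hg.2.1, fun x => by
    simp only [Function.comp_apply, hg.2.2.1, hf.2.2.1], ?_⟩
  refine ⟨Bg ∪ Bf.image (fun p => (tIso hg).symm p), ?_, ?_⟩
  · intro p hp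
    rcases Finset.mem_union.1 hp with h | h
    · exact hBg p h
    · obtain ⟨q, hq, rfl⟩ := Finset.mem_image.1 h
      exact tlift_symm_dyadic hg (hBf q hq)
  · intro x hx
    have hxg : ∀ p ∈ Bg, ∀ k : ℤ, x ≠ p + k := fun p hp =>
      hx p (Finset.mem_union_left _ hp)
    have hxf : ∀ p ∈ Bf, ∀ k : ℤ, g x ≠ p + k := by
      intro p hp k hcon
      refine hx ((tIso hg).symm p) (Finset.mem_union_right _ (Finset.mem_image.2 ⟨p, hp, rfl⟩))
        k ?_
      have : x = (tIso hg).symm (g x) := ((tIso hg).symm_apply_apply x).symm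
      rw [this, hcon, tlift_symm_add_int hg]
    obtain ⟨mg, cg, hcg, hevg⟩ := hlocg x hxg
    obtain ⟨mf, cf, hcf, hevf⟩ := hlocf (g x) hxf
    refine ⟨mf + mg, 2 ^ mf * cg + cf, (IsDyadic.zpow_mul _ hcg).add hcf, ?_⟩
    have hgx : Filter.Tendsto g (nhds x) (nhds (g x)) := (tlift_continuous hg).continuousAt
    filter_upwards [hevg, hgx.eventually hevf] with y h1 h2
    simp only [Function.comp_apply]
    rw [h2, h1, zpow_add₀ (two_ne_zero : (2:ℝ) ≠ 0)]
    ring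

end Closure

section Inv
variable {f : ℝ → ℝ} (hf : IsTLift f)
include hf

/-- T-lifts are closed under inverse. -/
lemma IsTLift.symm : IsTLift (fun z => (tIso hf).symm z) := by
  classical
  obtain ⟨Bf, hBf, hlocf⟩ := hf.2.2.2
  refine ⟨(tIso hf).symm.strictMono, (tIso hf).symm.toEquiv.bijective,
    fun z => by simpa using tlift_symm_add_int hf z 1, ?_⟩
  refine ⟨Bf.image f, ?_, ?_⟩
  · intro p hp
    obtain ⟨q, hq, rfl⟩ := Finset.mem_image.1 hp
    exact tlift_dyadic hf (hBf q hq)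
  · intro z hz
    set w := (tIso hf).symm z with hw
    have hwB : ∀ p ∈ Bf, ∀ k : ℤ, w ≠ p + k := by
      intro p hp k hcon
      refine hz (f p) (Finset.mem_image.2 ⟨p, hp, rfl⟩) k ?_
      have : z = f w := ((tIso hf).apply_symm_apply z).symm
      rw [this, hcon, tlift_add_int hf]
    obtain ⟨m, c, hcdy, hev⟩ := hlocf w hwB
    refine ⟨-m, -(2 ^ (-m : ℤ) * c),
      by simpa using ((IsDyadic.intCast 0).sub (IsDyadic.zpow_mul (-m) hcdy)), ?_⟩
    · have hcont : Filter.Tendsto (fun z => (tIso hf).symm z) (nhds z) (nhds w) := by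
        rw [hw]
        exact ((tIso hf).symm.toHomeomorph.continuous).continuousAt
      filter_upwards [hcont.eventually hev] with y hy
      have h2 : (2:ℝ) ^ m ≠ 0 := by positivity
      have : y = 2 ^ m * ((tIso hf).symm y) + c := by
        have := hy
        rwa [show f ((tIso hf).symm y) = y from (tIso hf).apply_symm_apply y] at this
      rw [zpow_neg]
      field_simp
      linarith [this]

end Inv

lemma coe_add_int (x : ℝ) (k : ℤ) : ((x + k : ℝ) : Circ) = (x : Circ) := by
  have hk : (k : ℝ) ∈ AddSubgroup.zmultiples (1:ℝ) := ⟨k, by simp⟩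
  exact QuotientAddGroup.mk_add_of_mem x hk

/-- The circle map induced by a T-lift. -/
noncomputable def cmap {f : ℝ → ℝ} (hf : IsTLift f) : Circ → Circ := fun q =>
  Quotient.liftOn' q (fun x => ((f x : ℝ) : Circ)) (by
    intro a b hab
    have hmem : -a + b ∈ AddSubgroup.zmultiples (1:ℝ) := QuotientAddGroup.leftRel_apply.1 hab
    obtain ⟨k, hk⟩ := hmem
    have hb : b = a + k := by
      have : (k : ℝ) = -a + b := by simpa using hk
      linarith [this]
    show ((f a : ℝ) : Circ) = ((f b : ℝ) : Circ)
    rw [hb, tlift_add_int hf, coe_add_int])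

lemma cmap_coe {f : ℝ → ℝ} (hf : IsTLift f) (x : ℝ) : cmap hf ((x : ℝ) : Circ) = ((f x : ℝ) : Circ) := rfl

/-- inverse circle map -/
noncomputable def cmapInv {f : ℝ → ℝ} (hf : IsTLift f) : Circ → Circ := fun q =>
  Quotient.liftOn' q (fun x => (((tIso hf).symm x : ℝ) : Circ)) (by
    intro a b hab
    have hmem : -a + b ∈ AddSubgroup.zmultiples (1:ℝ) := QuotientAddGroup.leftRel_apply.1 hab
    obtain ⟨k, hk⟩ := hmem
    have hb : b = a + k := by
      have : (k : ℝ) = -a + b := by simpa using hk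
      linarith [this]
    show (((tIso hf).symm a : ℝ) : Circ) = (((tIso hf).symm b : ℝ) : Circ)
    rw [hb, tlift_symm_add_int hf, coe_add_int])

lemma cmapInv_coe {f : ℝ → ℝ} (hf : IsTLift f) (x : ℝ) :
    cmapInv hf ((x : ℝ) : Circ) = (((tIso hf).symm x : ℝ) : Circ) := rfl

/-- The circle equivalence induced by a T-lift. -/
noncomputable def toCirc {f : ℝ → ℝ} (hf : IsTLift f) : Circ ≃ Circ where
  toFun := cmap hf
  invFun := cmapInv hf
  left_inv := by
    intro q
    induction q using Quotient.inductionOn' with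
    | h x =>
      show cmapInv hf (cmap hf ((x:ℝ):Circ)) = _
      rw [cmap_coe, cmapInv_coe]
      congr 1
      rw [← tIso_apply hf, OrderIso.symm_apply_apply]
  right_inv := by
    intro q
    induction q using Quotient.inductionOn' with
    | h x =>
      show cmap hf (cmapInv hf ((x:ℝ):Circ)) = _
      rw [cmapInv_coe, cmap_coe]
      congr 1
      rw [← tIso_apply hf, OrderIso.apply_symm_apply]

lemma toCirc_coe {f : ℝ → ℝ} (hf : IsTLift f) (x : ℝ) :
    toCirc hf ((x : ℝ) : Circ) = ((f x : ℝ) : Circ) := rfl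

lemma toCirc_symm_coe {f : ℝ → ℝ} (hf : IsTLift f) (x : ℝ) :
    (toCirc hf).symm ((x : ℝ) : Circ) = (((tIso hf).symm x : ℝ) : Circ) := rfl

lemma toCirc_isTElem {f : ℝ → ℝ} (hf : IsTLift f) : IsTElem (toCirc hf) :=
  ⟨f, hf, fun x => rfl⟩

lemma fixesNear_of_eqOn (ψ : Circ ≃ Circ) {a b z : ℝ}
    (h : ∀ s ∈ Set.Ioo a b, ψ ((s:ℝ):Circ) = ((s:ℝ):Circ)) (hz : z ∈ Set.Ioo a b) :
    FixesNear ψ ((z:ℝ):Circ) := by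
  have hopen : IsOpen ((QuotientAddGroup.mk : ℝ → Circ) '' Set.Ioo a b) :=
    QuotientAddGroup.isOpenMap_coe _ isOpen_Ioo
  have hmem : ((z:ℝ):Circ) ∈ (QuotientAddGroup.mk : ℝ → Circ) '' Set.Ioo a b :=
    ⟨z, hz, rfl⟩
  filter_upwards [hopen.mem_nhds hmem]
  rintro w ⟨s, hs, rfl⟩
  exact h s hs


/-- Every element `g` of Thompson's group `T` lies in a product
`T(x) · T(y)` of two germ stabilizers of dyadic rational points `x, y ∈ ℤ[1/2]/ℤ`. -/
theorem stmt13 (φ : Circ ≃ Circ) (hφ : IsTElem φ) :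
    ∃ x y : ℝ, IsDyadic x ∧ IsDyadic y ∧
      ∃ u v : Circ ≃ Circ, IsTElem u ∧ IsTElem v ∧
        FixesNear u (x : ℝ) ∧ FixesNear v (y : ℝ) ∧ φ = v.trans u := by
  classical
  obtain ⟨f0, hf0, hφ0⟩ := hφ
  obtain ⟨δ, hδpos, m, c, hcdy, hev⟩ := tlift_right_structure hf0 0
  obtain ⟨a, hady, h0a, haδ⟩ := exists_dyadic_between (show (0:ℝ) < 0 + δ by linarith)
  set k₀ : ℤ := ⌊f0 a - a⌋ with hk₀
  set f : ℝ → ℝ := fun s => f0 s - k₀ with hfdef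
  have hf : IsTLift f := hf0.sub_int k₀
  have hφf : ∀ s : ℝ, φ ((s:ℝ):Circ) = ((f s : ℝ):Circ) := by
    intro s
    rw [hφ0 s]
    have h := coe_add_int (f0 s - k₀) k₀
    rw [show (f0 s - (k₀:ℝ)) + (k₀:ℝ) = f0 s by ring] at h
    have h2 : f s = f0 s - k₀ := rfl
    rw [h2]
    exact h
  set c' : ℝ := c - k₀ with hc'
  have hc'dy : IsDyadic c' := hcdy.sub (IsDyadic.intCast k₀)
  have haff : ∀ s ∈ Set.Ioo (0:ℝ) (0 + δ), f s = 2 ^ m * s + c' := by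
    intro s hs
    rw [hfdef]
    simp only
    rw [(hev s hs).self_of_nhds, hc']
    ring
  set A₀ : ℝ := f a with hA₀
  have haA : a ≤ A₀ := by
    rw [hA₀, hfdef]
    simp only
    have h := Int.floor_le (f0 a - a)
    rw [← hk₀] at h
    linarith
  have hA1 : A₀ < a + 1 := by
    rw [hA₀, hfdef]
    simp only
    have h := Int.lt_floor_add_one (f0 a - a)
    rw [← hk₀] at h
    push_cast at h
    linarith
  have hA₀eq : A₀ = 2 ^ m * a + c' := by rw [hA₀]; exact haff a ⟨h0a, haδ⟩
  have hA₀dy : IsDyadic A₀ := by rw [hA₀eq]; exact (IsDyadic.zpow_mul m hady).add hc'dy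
  have h2mpos : (0:ℝ) < 2 ^ m := by positivity
  have h2mneg : (0:ℝ) < 2 ^ (-m) := by positivity
  have hub : a < min (min (0 + δ) (a + 1)) (a + 2 ^ (-m) * (a + 1 - A₀)) := by
    refine lt_min (lt_min haδ (by linarith)) ?_
    nlinarith [mul_pos h2mneg (show (0:ℝ) < a + 1 - A₀ by linarith)]
  obtain ⟨b, hbdy, hab, hbub⟩ := exists_dyadic_between hub
  have hbδ : b < 0 + δ := lt_of_lt_of_le hbub (le_trans (min_le_left _ _) (min_le_left _ _))
  have hba1 : b < a + 1 := lt_of_lt_of_le hbub (le_trans (min_le_left _ _) (min_le_right _ _))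
  have hbA : b < a + 2 ^ (-m) * (a + 1 - A₀) := lt_of_lt_of_le hbub (min_le_right _ _)
  set Bv : ℝ := A₀ + 2 ^ m * (b - a) with hBvdef
  have hBvdy : IsDyadic Bv := hA₀dy.add (IsDyadic.zpow_mul m (hbdy.sub hady))
  have hABv : A₀ < Bv := by
    rw [hBvdef]
    nlinarith [sub_pos.2 hab]
  have hBva1 : Bv < a + 1 := by
    have h1 : b - a < 2 ^ (-m) * (a + 1 - A₀) := by linarith
    have h2 : (2:ℝ) ^ m * (b - a) < 2 ^ m * (2 ^ (-m) * (a + 1 - A₀)) :=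
      mul_lt_mul_of_pos_left h1 h2mpos
    rw [← mul_assoc, ← zpow_add₀ (two_ne_zero : (2:ℝ) ≠ 0)] at h2
    simp only [add_neg_cancel, zpow_zero, one_mul] at h2
    rw [hBvdef]
    linarith
  have hmaxmin : max b Bv < min (a+1) (A₀+1) :=
    max_lt (lt_min hba1 (by linarith)) (lt_min hBva1 (by linarith))
  obtain ⟨x₁, hx₁dy, hx₁l, hx₁u⟩ := exists_dyadic_between hmaxmin
  obtain ⟨x₂, hx₂dy, hx₂l, hx₂u⟩ := exists_dyadic_between hx₁u
  have hbx₁ : b < x₁ := lt_of_le_of_lt (le_max_left _ _) hx₁l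
  have hBvx₁ : Bv < x₁ := lt_of_le_of_lt (le_max_right _ _) hx₁l
  have hx₂a1 : x₂ < a + 1 := lt_of_lt_of_le hx₂u (min_le_left _ _)
  have hx₂A1 : x₂ < A₀ + 1 := lt_of_lt_of_le hx₂u (min_le_right _ _)
  -- build the chain for the auxiliary element u
  obtain ⟨K₁, t₁, v₁, hK₁, hc₁, ht₁0, hv₁0, ht₁K, hv₁K⟩ :=
    dchain_general hbdy hx₁dy hBvdy hx₁dy hbx₁ hBvx₁
  obtain ⟨K₃, t₃, v₃, hK₃, hc₃, ht₃0, hv₃0, ht₃K, hv₃K⟩ :=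
    dchain_general hx₂dy (hady.add IsDyadic.one) hx₂dy (hA₀dy.add IsDyadic.one) hx₂a1 hx₂A1
  have hslope0 : Bv - A₀ = 2 ^ m * (b - a) := by rw [hBvdef]; ring
  have hc0 := dchain_single m hab hslope0 hady hbdy hA₀dy hBvdy
  have hslope2 : x₂ - x₁ = 2 ^ (0:ℤ) * (x₂ - x₁) := by rw [zpow_zero, one_mul]
  have hc2 := dchain_single 0 hx₂l hslope2 hx₁dy hx₂dy hx₁dy hx₂dy
  have key : ∃ (N : ℕ) (T V : ℕ → ℝ), DChain N T V ∧ 0 < N ∧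
      T 0 = a ∧ V 0 = A₀ ∧ T N = a + 1 ∧ V N = A₀ + 1 ∧ T 1 = b ∧ V 1 = Bv ∧
      ∃ j, 0 < j ∧ j + 1 < N ∧ T j = x₁ ∧ T (j+1) = x₂ ∧ V j = x₁ ∧ V (j+1) = x₂ := by
    have hj01 : (fun i => if i = 0 then a else b) 1 = t₁ 0 := by simp [ht₁0]
    have hj01' : (fun i => if i = 0 then A₀ else Bv) 1 = v₁ 0 := by simp [hv₁0]
    have hc01 := dchain_concat hc0 hc₁ hj01 hj01'
    have hj12 : (fun i => if i ≤ 1 then (fun i => if i = 0 then a else b) i else t₁ (i - 1))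
        (1 + K₁) = (fun i => if i = 0 then x₁ else x₂) 0 := by
      show (if 1 + K₁ ≤ 1 then (if 1 + K₁ = 0 then a else b) else t₁ (1 + K₁ - 1))
        = (if (0:ℕ) = 0 then x₁ else x₂)
      rw [if_neg (show ¬(1 + K₁ ≤ 1) by omega), if_pos (show (0:ℕ) = 0 from rfl),
        show 1 + K₁ - 1 = K₁ by omega, ht₁K]
    have hj12' : (fun i => if i ≤ 1 then (fun i => if i = 0 then A₀ else Bv) i else v₁ (i - 1))
        (1 + K₁) = (fun i => if i = 0 then x₁ else x₂) 0 := by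
      show (if 1 + K₁ ≤ 1 then (if 1 + K₁ = 0 then A₀ else Bv) else v₁ (1 + K₁ - 1))
        = (if (0:ℕ) = 0 then x₁ else x₂)
      rw [if_neg (show ¬(1 + K₁ ≤ 1) by omega), if_pos (show (0:ℕ) = 0 from rfl),
        show 1 + K₁ - 1 = K₁ by omega, hv₁K]
    have hc012 := dchain_concat hc01 hc2 hj12 hj12'
    have hj23 : (fun i => if i ≤ 1 + K₁ then
          (fun i => if i ≤ 1 then (fun i => if i = 0 then a else b) i else t₁ (i - 1)) i
        else (fun i => if i = 0 then x₁ else x₂) (i - (1 + K₁))) (1 + K₁ + 1) = t₃ 0 := by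
      simp only
      rw [if_neg (show ¬(1 + K₁ + 1 ≤ 1 + K₁) by omega),
        show 1 + K₁ + 1 - (1 + K₁) = 1 by omega, if_neg (show ¬((1:ℕ) = 0) by omega), ht₃0]
    have hj23' : (fun i => if i ≤ 1 + K₁ then
          (fun i => if i ≤ 1 then (fun i => if i = 0 then A₀ else Bv) i else v₁ (i - 1)) i
        else (fun i => if i = 0 then x₁ else x₂) (i - (1 + K₁))) (1 + K₁ + 1) = v₃ 0 := by
      simp only
      rw [if_neg (show ¬(1 + K₁ + 1 ≤ 1 + K₁) by omega),
        show 1 + K₁ + 1 - (1 + K₁) = 1 by omega, if_neg (show ¬((1:ℕ) = 0) by omega), hv₃0]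
    have hC := dchain_concat hc012 hc₃ hj23 hj23'
    refine ⟨1 + K₁ + 1 + K₃, _, _, hC, by omega, ?_, ?_, ?_, ?_, ?_, ?_,
      ⟨1 + K₁, by omega, by omega, ?_, ?_, ?_, ?_⟩⟩
    · simp
    · simp
    · rw [if_neg (show ¬(1 + K₁ + 1 + K₃ ≤ 1 + K₁ + 1) by omega),
        show 1 + K₁ + 1 + K₃ - (1 + K₁ + 1) = K₃ by omega, ht₃K]
    · rw [if_neg (show ¬(1 + K₁ + 1 + K₃ ≤ 1 + K₁ + 1) by omega),
        show 1 + K₁ + 1 + K₃ - (1 + K₁ + 1) = K₃ by omega, hv₃K]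
    · rw [if_pos (show 1 ≤ 1 + K₁ + 1 by omega), if_pos (show 1 ≤ 1 + K₁ by omega),
        if_pos (show 1 ≤ 1 by omega), if_neg (show ¬((1:ℕ) = 0) by omega)]
    · rw [if_pos (show 1 ≤ 1 + K₁ + 1 by omega), if_pos (show 1 ≤ 1 + K₁ by omega),
        if_pos (show 1 ≤ 1 by omega), if_neg (show ¬((1:ℕ) = 0) by omega)]
    · rw [if_pos (show 1 + K₁ ≤ 1 + K₁ + 1 by omega), if_pos (show 1 + K₁ ≤ 1 + K₁ by omega),
        if_neg (show ¬(1 + K₁ ≤ 1) by omega), show 1 + K₁ - 1 = K₁ by omega, ht₁K]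
    · rw [if_pos (show 1 + K₁ + 1 ≤ 1 + K₁ + 1 by omega),
        if_neg (show ¬(1 + K₁ + 1 ≤ 1 + K₁) by omega),
        show 1 + K₁ + 1 - (1 + K₁) = 1 by omega, if_neg (show ¬((1:ℕ) = 0) by omega)]
    · rw [if_pos (show 1 + K₁ ≤ 1 + K₁ + 1 by omega), if_pos (show 1 + K₁ ≤ 1 + K₁ by omega),
        if_neg (show ¬(1 + K₁ ≤ 1) by omega), show 1 + K₁ - 1 = K₁ by omega, hv₁K]
    · rw [if_pos (show 1 + K₁ + 1 ≤ 1 + K₁ + 1 by omega),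
        if_neg (show ¬(1 + K₁ + 1 ≤ 1 + K₁) by omega),
        show 1 + K₁ + 1 - (1 + K₁) = 1 by omega, if_neg (show ¬((1:ℕ) = 0) by omega)]
  obtain ⟨N, T, V, hC, hN, hT0, hV0, hTN, hVN, hT1, hV1,
    j, hj0, hjN, hTj, hTj1, hVj, hVj1⟩ := key
  have hpt : T N = T 0 + 1 := by rw [hTN, hT0]
  have hpv : V N = V 0 + 1 := by rw [hVN, hV0]
  set g : ℝ → ℝ := chainLift N T V with hgdef
  have hg : IsTLift g := chainLift_isTLift hC hpt hpv hN
  -- g equals the identity on (x₁, x₂)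
  have hG1 : ∀ s ∈ Set.Ioo x₁ x₂, g s = s := by
    intro s hs
    have hseg := chainLift_segment_base hC (show j < N by omega) (y := s)
      ⟨by rw [hTj]; exact hs.1.le, by rw [hTj1]; exact hs.2.le⟩
      (by rw [hT0]; exact lt_trans hs.2 hx₂a1)
    have hsl : cSlope T V j = 1 := by
      unfold cSlope
      rw [hVj1, hVj, hTj1, hTj]
      exact div_self (ne_of_gt (sub_pos.2 hx₂l))
    rw [hgdef, hseg, hsl, hVj, hTj]
    ring
  -- g equals f on (a, b)
  have hG2 : ∀ s ∈ Set.Ioo a b, g s = f s := by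
    intro s hs
    have hseg := chainLift_segment_base hC (show 0 < N by omega) (y := s)
      ⟨by rw [hT0]; exact hs.1.le, by rw [hT1]; exact hs.2.le⟩
      (by rw [hT0]; exact lt_trans hs.2 hba1)
    have hsl : cSlope T V 0 = 2 ^ m := by
      unfold cSlope
      rw [hV1, hV0, hT1, hT0, hslope0]
      exact mul_div_cancel_right₀ _ (ne_of_gt (sub_pos.2 hab))
    rw [hgdef, hseg, hsl, hV0, hT0, hA₀eq]
    have hfs : f s = 2 ^ m * s + c' := haff s ⟨lt_trans h0a hs.1, lt_trans hs.2 hbδ⟩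
    rw [hfs]
    ring
  set u : Circ ≃ Circ := toCirc hg with hu
  set v : Circ ≃ Circ := φ.trans u.symm with hv
  have hx₁x : x₁ < (x₁ + x₂)/2 := by linarith
  have hxx₂ : (x₁ + x₂)/2 < x₂ := by linarith
  obtain ⟨y, hydy, hay, hyb⟩ := exists_dyadic_between hab
  refine ⟨(x₁ + x₂)/2, y, (hx₁dy.add hx₂dy).div_two, hydy, u, v, toCirc_isTElem hg, ?_, ?_, ?_, ?_⟩
  · -- v is a T element
    refine ⟨(fun z => (tIso hg).symm z) ∘ f, (IsTLift.symm hg).comp hf, ?_⟩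
    intro s
    rw [hv]
    simp only [Equiv.trans_apply]
    rw [hφf s, hu, toCirc_symm_coe]
    rfl
  · -- u fixes near (x₁+x₂)/2
    refine fixesNear_of_eqOn u (a := x₁) (b := x₂) ?_ ⟨hx₁x, hxx₂⟩
    intro s hs
    rw [hu, toCirc_coe, hG1 s hs]
  · -- v fixes near y
    refine fixesNear_of_eqOn v (a := a) (b := b) ?_ ⟨hay, hyb⟩
    intro s hs
    rw [hv]
    simp only [Equiv.trans_apply]
    rw [hφf s, hu, toCirc_symm_coe]
    have : f s = g s := (hG2 s hs).symm
    rw [this]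
    have : (tIso hg).symm (g s) = s := by
      rw [← tIso_apply hg s, OrderIso.symm_apply_apply]
    rw [this]
  · -- φ = v.trans u
    apply Equiv.ext
    intro w
    rw [hv]
    simp only [Equiv.trans_apply, Equiv.apply_symm_apply]
end

section
/- Let Γ be a finitely generated group, and let 𝒢 be a family of metric groups each of which is locally residually finite (every finitely generated subgroup is residually finite). If Γ is pointwise 𝒢-stable and pointwise 𝒢-approximable, then Γ is residually finite. -/
open Filter

/-- A group is residually finite if every nontrivial element survives in some finite quotient. -/
def ResiduallyFinite (G : Type*) [Group G] : Prop :=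
  ∀ g : G, g ≠ 1 → ∃ N : Subgroup G, N.Normal ∧ Finite (G ⧸ N) ∧ g ∉ N

/-- If some homomorphism to a locally-residually-finite group separates `g`, then `g` survives
in a finite quotient of `Γ`. -/
lemma sep_of_hom {Γ : Type*} [Group Γ] [Group.FG Γ] {H : Type*} [Group H]
    (hrf : ∀ K : Subgroup H, Group.FG ↥K → ResiduallyFinite ↥K)
    (ψ : Γ →* H) (g : Γ) (hg : ψ g ≠ 1) :
    ∃ N : Subgroup Γ, N.Normal ∧ Finite (Γ ⧸ N) ∧ g ∉ N := by
  set f : Γ →* ψ.range := ψ.rangeRestrict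
  have hfg : f g ≠ 1 := by
    intro h
    exact hg (congrArg Subtype.val h)
  obtain ⟨N, hN, hfin, hgN⟩ := hrf ψ.range inferInstance (f g) hfg
  haveI := hN
  set χ : Γ →* (↥ψ.range ⧸ N) := (QuotientGroup.mk' N).comp f
  refine ⟨χ.ker, inferInstance, ?_, ?_⟩
  · exact Finite.of_injective _ (QuotientGroup.kerLift_injective χ)
  · intro hgk
    have : f g ∈ N := (QuotientGroup.eq_one_iff (f g)).mp hgk
    exact hgN this

/-- If `Γ` is a finitely generated group, `𝒢 = (G i)` a family of metric groups
each of which is locally residually finite, and `Γ` is pointwise `𝒢`-stable and pointwise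
`𝒢`-approximable, then `Γ` is residually finite. -/
theorem stmt14 {Γ : Type*} [Group Γ] [Group.FG Γ]
    {ι : Type*} (G : ι → Type*) [∀ i, Group (G i)] [∀ i, MetricSpace (G i)]
    (hlrf : ∀ i, ∀ H : Subgroup (G i), Group.FG ↥H → ResiduallyFinite ↥H)
    (hstab : ∀ (idx : ℕ → ι) (φ : ∀ n, Γ → G (idx n)),
      (∀ g h : Γ,
        Tendsto (fun n => dist (φ n (g * h)) (φ n g * φ n h)) atTop (nhds 0)) →
      ∃ ψ : ∀ n, Γ →* G (idx n), ∀ g : Γ,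
        Tendsto (fun n => dist (φ n g) (ψ n g)) atTop (nhds 0))
    (happrox : ∃ (idx : ℕ → ι) (φ : ∀ n, Γ → G (idx n)),
      (∀ g h : Γ,
        Tendsto (fun n => dist (φ n (g * h)) (φ n g * φ n h)) atTop (nhds 0)) ∧
      (∀ g : Γ, g ≠ 1 → ∃ ρ > (0 : ℝ), ∀ᶠ n in atTop, ρ ≤ dist (φ n g) 1)) :
    ResiduallyFinite Γ := by
  obtain ⟨idx, φ, hmul, hsep⟩ := happrox
  obtain ⟨ψ, hψ⟩ := hstab idx φ hmul
  intro g hg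
  obtain ⟨ρ, hρ, hev⟩ := hsep g hg
  have hclose : ∀ᶠ n in atTop, dist (φ n g) (ψ n g) < ρ :=
    (hψ g).eventually (Filter.Tendsto.eventually_lt_const hρ tendsto_id)
  obtain ⟨n, hn1, hn2⟩ := (hev.and hclose).exists
  have hne : ψ n g ≠ 1 := by
    intro h
    rw [h] at hn2
    exact absurd hn1 (not_le.mpr hn2)
  exact sep_of_hom (hlrf (idx n)) (ψ n) g hne
end
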